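/- arXiv:1902.07604 — 2 statements merged into one kernel-verified Lean document; each statement's English description precedes it below -/
import Mathlib

section
/- Let 0 < r ≤ p ≤ 1 with r ≠ 1 (so r < 1), let q = p, let v be a weight on (0,∞), u ∈ Ω̃_r and w ∈ Ω_p. Define ω₂(x) := (∫_x^∞ w(s)^p ds)^{1/p} v(x). Then for every nonnegative measurable f on (0,∞), ‖f‖_{M(Cop_r(u), Ces_{p,p}(w,v))} ≈ sup_{t∈(0,∞)} (∫_0^t u(s)^r ds)^{−1/r} ‖f·ω₂‖_{p',(0,t)}, with equivalence constants depending only on p and r. -/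
open MeasureTheory ENNReal Set Filter

/-- `‖f‖_{p,s}`: the Lebesgue functional `(∫_s f^p)^{1/p}` for `p < ∞`,
and `esssup_s f` for `p = ∞`. -/
noncomputable def wNorm (p : ℝ≥0∞) (f : ℝ → ℝ≥0∞) (s : Set ℝ) : ℝ≥0∞ :=
  if p = ∞ then essSup f (volume.restrict s)
  else (∫⁻ x in s, f x ^ p.toReal) ^ (1 / p.toReal)

/-- The weighted Cesàro functional `‖f‖_{Ces_{p,q}(u,v)} = ‖ t ↦ ‖f‖_{p,v,(0,t)} ‖_{q,u,(0,∞)}`. -/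
noncomputable def cesaroNorm (p q : ℝ≥0∞) (u v : ℝ → ℝ≥0∞) (f : ℝ → ℝ≥0∞) : ℝ≥0∞ :=
  wNorm q (fun t => wNorm p (fun x => f x * v x) (Ioo 0 t) * u t) (Ioi 0)

/-- The weighted Copson functional `‖f‖_{Cop_{p,q}(u,v)} = ‖ t ↦ ‖f‖_{p,v,(t,∞)} ‖_{q,u,(0,∞)}`. -/
noncomputable def copsonNorm (p q : ℝ≥0∞) (u v : ℝ → ℝ≥0∞) (f : ℝ → ℝ≥0∞) : ℝ≥0∞ :=
  wNorm q (fun t => wNorm p (fun x => f x * v x) (Ioi t) * u t) (Ioi 0)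

/-- The multiplier functional `‖f‖_{M(X,Y)} = sup { ‖f·g‖_Y / ‖g‖_X :
g nonnegative measurable, g not a.e. zero on (0,∞) }`. -/
noncomputable def multNorm (X Y : (ℝ → ℝ≥0∞) → ℝ≥0∞) (f : ℝ → ℝ≥0∞) : ℝ≥0∞ :=
  ⨆ (g : ℝ → ℝ≥0∞) (_ : Measurable g ∧
      ¬ (∀ᵐ x ∂(volume.restrict (Ioi (0:ℝ))), g x = 0)),
    Y (fun x => f x * g x) / X g

/-- A weight on `(0,∞)`: measurable, positive and finite a.e. on `(0,∞)`. -/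
def IsWeightOn (v : ℝ → ℝ≥0∞) : Prop :=
  Measurable v ∧ ∀ᵐ x ∂(volume.restrict (Ioi (0:ℝ))), 0 < v x ∧ v x < ∞

/-- `u ∈ Ω_q`: `0 < ‖u‖_{q,(t,∞)} < ∞` for all `t > 0`. -/
def MemOmega (q : ℝ≥0∞) (u : ℝ → ℝ≥0∞) : Prop :=
  Measurable u ∧ ∀ t : ℝ, 0 < t → 0 < wNorm q u (Ioi t) ∧ wNorm q u (Ioi t) < ∞

/-- `u ∈ Ω̃_q`: `0 < ‖u‖_{q,(0,t)} < ∞` for all `t > 0`. -/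
def MemOmegaDual (q : ℝ≥0∞) (u : ℝ → ℝ≥0∞) : Prop :=
  Measurable u ∧ ∀ t : ℝ, 0 < t → 0 < wNorm q u (Ioo 0 t) ∧ wNorm q u (Ioo 0 t) < ∞

/-- The exponent `p'`: `p/(1−p)` if `p < 1`, `∞` if `p = 1`, `p/(p−1)` if `p > 1`. -/
noncomputable def dualExp (p : ℝ) : ℝ≥0∞ :=
  if p < 1 then ENNReal.ofReal (p / (1 - p))
  else if p = 1 then ∞
  else ENNReal.ofReal (p / (p - 1))

/-- An admissible function: continuous and strictly increasing on `[0,∞)`,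
vanishing at `0` and tending to `∞` at `∞`. -/
def AdmissibleFn (U : ℝ → ℝ≥0∞) : Prop :=
  ContinuousOn U (Ici 0) ∧ StrictMonoOn U (Ici 0) ∧ U 0 = 0 ∧
    Tendsto U atTop (nhds ∞)

/-- φ is equivalent to ψ on `(0,∞)` up to multiplicative constants. -/
def EquivOn (φ ψ : ℝ → ℝ≥0∞) : Prop :=
  ∃ c C : ℝ≥0∞, 0 < c ∧ C < ∞ ∧ ∀ x ∈ Ioi (0:ℝ), c * ψ x ≤ φ x ∧ φ x ≤ C * ψ x

/-- `φ ∈ Q_U`: φ is non-degenerate and `U`-quasiconcave, i.e. φ is equivalent to a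
nondecreasing function on `(0,∞)`, `φ/U` is equivalent to a nonincreasing function on
`(0,∞)`, and `lim_{t→0+} φ(t) = lim_{t→∞} 1/φ(t) = lim_{t→∞} φ(t)/U(t)
= lim_{t→0+} U(t)/φ(t) = 0`. -/
def MemQClass (U φ : ℝ → ℝ≥0∞) : Prop :=
  (∃ ψ : ℝ → ℝ≥0∞, MonotoneOn ψ (Ioi 0) ∧ EquivOn φ ψ) ∧
  (∃ ψ : ℝ → ℝ≥0∞, AntitoneOn ψ (Ioi 0) ∧ EquivOn (fun x => φ x / U x) ψ) ∧
  Tendsto φ (nhdsWithin 0 (Ioi 0)) (nhds 0) ∧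
  Tendsto (fun t => (φ t)⁻¹) atTop (nhds 0) ∧
  Tendsto (fun t => φ t / U t) atTop (nhds 0) ∧
  Tendsto (fun t => U t / φ t) (nhdsWithin 0 (Ioi 0)) (nhds 0)

/-!
Write `h = f ω₂`, `U(t) = ∫_0^t u^r` and `G(t) = ∫_t^∞ g`. By Tonelli the Cesàro norm of `f g` is
`‖h g‖_p` and the Copson norm of `g` is `(∫ G^r dU)^{1/r}`, so `‖f‖_M` is the best constant in
`‖h g‖_p ≤ C (∫ G^r dU)^{1/r}`.

Tested against functions supported in `(0, t)`, whose Copson norm is at most `U(t)^{1/r} ‖g‖_1`,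
this gives `‖h g‖_p ≤ U(t)^{1/r} ‖f‖_M ‖g‖_1` there, hence `‖h‖_{p',(0,t)} ≤ U(t)^{1/r} ‖f‖_M` by
the converse of Hölder's inequality.

Conversely, let `S` bound `U(t)^{-1/r} ‖h‖_{p',(0,t)}` and cut `(0, ∞)` into the bands
`2^k ≤ U < 2^{k+1}`. Since `U` is continuous, it reaches `2^k` at a first time `τ_k`, and band `k`
is `[τ_k, τ_{k+1})`. The part of band `k + 1` inside `(0, n)` lies in `(0, τ_{k+2})`, or in
`(0, n)` if `U(n) < 2^{k+2}`; either way `‖h‖_{p'} ≤ S 2^{(k+2)/r}` on it, and Hölder's inequality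
gives `∫ h^p g^p ≤ S^p (2^{k+2} G(τ_{k+1})^r)^{p/r}` there. As `G` decreases and band `k` has
`U`-mass `2^k` and ends at `τ_{k+1}`, this is at most `S^p (4 ∫_{band k} G^r dU)^{p/r}`. Since
`p / r ≥ 1`, summing over `k` and letting `n → ∞` gives `‖h g‖_p ≤ 4^{1/r} S (∫ G^r dU)^{1/r}`.
-/

open Topology

lemma ENNReal.iSup_min_natCast_rpow (a : ℝ≥0∞) {q : ℝ} (hq : 0 < q) :
    ⨆ n : ℕ, min a n ^ q = a ^ q := by
  have := (ENNReal.orderIsoRpow q hq).map_iSup fun n : ℕ => min a n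
  simp only [ENNReal.orderIsoRpow_apply] at this
  rw [← this, ← inf_iSup_eq, ENNReal.iSup_natCast, inf_top_eq]

lemma ENNReal.tsum_rpow_le_rpow_tsum {ι : Type*} {s : ℝ} (hs : 1 ≤ s) (b : ι → ℝ≥0∞) :
    ∑' i, b i ^ s ≤ (∑' i, b i) ^ s := by
  have hsplit : ∀ x : ℝ≥0∞, x ^ s = x * x ^ (s - 1) := fun x => by
    conv_lhs => rw [show s = 1 + (s - 1) by ring]
    rw [ENNReal.rpow_add_of_nonneg _ _ zero_le_one (by linarith), ENNReal.rpow_one]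
  calc ∑' i, b i ^ s = ∑' i, b i * b i ^ (s - 1) := by simp_rw [← hsplit]
    _ ≤ ∑' i, b i * (∑' j, b j) ^ (s - 1) := by
        gcongr with i
        exact ENNReal.le_tsum i
    _ = (∑' i, b i) ^ s := by rw [ENNReal.tsum_mul_right, hsplit]

lemma ENNReal.rpow_neg_mul_le_iff {x a b : ℝ≥0∞} (hx0 : x ≠ 0) (hxtop : x ≠ ∞) {s : ℝ}
    (hs : 0 ≤ s) : x ^ (-s) * a ≤ b ↔ a ≤ x ^ s * b := by
  rw [ENNReal.rpow_neg, ENNReal.inv_mul_le_iff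
    (ENNReal.rpow_pos (pos_iff_ne_zero.mpr hx0) hxtop).ne' (ENNReal.rpow_ne_top_of_nonneg hs hxtop)]

lemma ENNReal.two_zpow_add_one (k : ℤ) : (2 : ℝ≥0∞) ^ (k + 1) = 2 * 2 ^ k := by
  rw [ENNReal.zpow_add two_ne_zero ofNat_ne_top, zpow_one, mul_comm]

lemma wNorm_top (f : ℝ → ℝ≥0∞) (s : Set ℝ) : wNorm ∞ f s = essSup f (volume.restrict s) :=
  if_pos rfl

lemma wNorm_ofReal {p : ℝ} (hp : 0 < p) (f : ℝ → ℝ≥0∞) (s : Set ℝ) :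
    wNorm (ENNReal.ofReal p) f s = (∫⁻ x in s, f x ^ p) ^ (1 / p) := by
  rw [wNorm, if_neg ofReal_ne_top, toReal_ofReal hp.le]

lemma wNorm_one (f : ℝ → ℝ≥0∞) (s : Set ℝ) : wNorm 1 f s = ∫⁻ x in s, f x := by
  simpa using wNorm_ofReal one_pos f s

lemma wNorm_mono_set (q : ℝ≥0∞) (f : ℝ → ℝ≥0∞) {A B : Set ℝ} (hAB : A ⊆ B) :
    wNorm q f A ≤ wNorm q f B := by
  unfold wNorm
  split
  · exact essSup_mono_measure
      (Measure.absolutelyContinuous_of_le (Measure.restrict_mono hAB le_rfl))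
  · gcongr

lemma dualExp_one : dualExp 1 = ∞ := by simp [dualExp]

lemma dualExp_of_lt_one {p : ℝ} (hp1 : p < 1) : dualExp p = ENNReal.ofReal (p / (1 - p)) :=
  if_pos hp1

lemma setLIntegral_rpow_mul_rpow_le {p : ℝ} (hp : 0 < p) (hp1 : p ≤ 1) {A : Set ℝ}
    {h g : ℝ → ℝ≥0∞} (hh : Measurable h) (hg : Measurable g) {M : ℝ≥0∞}
    (hM : wNorm (dualExp p) h A ≤ M) :
    ∫⁻ x in A, h x ^ p * g x ^ p ≤ (M * ∫⁻ x in A, g x) ^ p := by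
  rcases hp1.eq_or_lt with rfl | hp1
  · rw [dualExp_one, wNorm_top] at hM
    simp only [ENNReal.rpow_one]
    calc ∫⁻ x in A, h x * g x ≤ ∫⁻ x in A, M * g x :=
          lintegral_mono_ae <| (ENNReal.ae_le_essSup h).mono fun x hx => by
            gcongr
            exact hx.trans hM
      _ = M * ∫⁻ x in A, g x := lintegral_const_mul M hg
  · set q := p / (1 - p)
    have h1p : 0 < 1 - p := by linarith
    have hqp : q * (1 - p) = p := div_mul_cancel₀ p h1p.ne'
    rw [dualExp_of_lt_one hp1, wNorm_ofReal (div_pos hp h1p), one_div,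
      ENNReal.rpow_inv_le_iff (div_pos hp h1p)] at hM
    calc ∫⁻ x in A, h x ^ p * g x ^ p = ∫⁻ x in A, (h x ^ q) ^ (1 - p) * g x ^ p := by
          simp_rw [← ENNReal.rpow_mul, hqp]
      _ ≤ (∫⁻ x in A, h x ^ q) ^ (1 - p) * (∫⁻ x in A, g x) ^ p :=
          ENNReal.lintegral_mul_norm_pow_le (hh.pow_const q).aemeasurable hg.aemeasurable
            h1p.le hp.le (by ring)
      _ ≤ (M ^ q) ^ (1 - p) * (∫⁻ x in A, g x) ^ p := by gcongr
      _ = (M * ∫⁻ x in A, g x) ^ p := by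
          rw [← ENNReal.rpow_mul, hqp, ENNReal.mul_rpow_of_nonneg _ _ hp.le]

lemma essSup_le_of_forall_setLIntegral_mul_le {A : Set ℝ} (hA : MeasurableSet A)
    (hAfin : volume A ≠ ∞) {h : ℝ → ℝ≥0∞} (hh : Measurable h) {M : ℝ≥0∞}
    (hM : ∀ F : ℝ → ℝ≥0∞, Measurable F → ∫⁻ x in A, F x ≠ 0 → ∫⁻ x in A, F x ≠ ∞ →
      ∫⁻ x in A, h x * F x ≤ M * ∫⁻ x in A, F x) :
    essSup h (volume.restrict A) ≤ M := by
  refine le_of_forall_lt_imp_le_of_dense fun b hb => ?_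
  set B := A ∩ {x | b < h x}
  have hBm : MeasurableSet B := hA.inter (measurableSet_lt measurable_const hh)
  have hB0 : volume B ≠ 0 := by
    intro hB0
    have hae : ∀ᵐ x ∂volume.restrict A, h x ≤ b := by
      rw [ae_restrict_iff' hA]
      refine measure_mono_null (fun x hx => ?_) hB0
      by_contra hxB
      exact hx fun hxA => not_lt.mp fun hlt => hxB ⟨hxA, hlt⟩
    exact (essSup_le_of_ae_le b hae).not_gt hb
  have hBfin : volume B ≠ ∞ := ne_top_of_le_ne_top hAfin (measure_mono inter_subset_left)
  have hF : ∫⁻ x in A, B.indicator 1 x = volume B := by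
    rw [lintegral_indicator_one hBm, Measure.restrict_apply hBm,
      inter_eq_left.mpr inter_subset_left]
  have key := hM (B.indicator 1) (measurable_one.indicator hBm) (hF ▸ hB0) (hF ▸ hBfin)
  rw [hF] at key
  refine (ENNReal.mul_le_mul_iff_left hB0 hBfin).mp (le_trans ?_ key)
  calc b * volume B = ∫⁻ _ in B, b := (setLIntegral_const B b).symm
    _ ≤ ∫⁻ x in B, h x := setLIntegral_mono hh fun x hx => hx.2.le
    _ = ∫⁻ x in A, h x * B.indicator 1 x := by
        rw [← lintegral_indicator hBm, ← lintegral_indicator hA]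
        refine lintegral_congr fun x => ?_
        by_cases hxB : x ∈ B
        · simp [indicator_of_mem hxB, indicator_of_mem hxB.1]
        · by_cases hxA : x ∈ A <;> simp [indicator_of_notMem hxB, hxA]

/-- The extremal functions of Hölder's inequality are the powers `h ^ (p / (1 - p))`; truncating
them keeps their integrals finite. -/
lemma setLIntegral_rpow_le_of_forall_setLIntegral_rpow_mul_le {p : ℝ} (hp : 0 < p) (hp1 : p < 1)
    {A : Set ℝ} (hAfin : volume A ≠ ∞) {h : ℝ → ℝ≥0∞} (hh : Measurable h) {M : ℝ≥0∞}
    (hM : ∀ F : ℝ → ℝ≥0∞, Measurable F → ∫⁻ x in A, F x ≠ 0 → ∫⁻ x in A, F x ≠ ∞ →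
      (∫⁻ x in A, h x ^ p * F x ^ p) ^ (1 / p) ≤ M * ∫⁻ x in A, F x) :
    ∫⁻ x in A, h x ^ (p / (1 - p)) ≤ M ^ (p / (1 - p)) := by
  set q := p / (1 - p)
  have h1p : 0 < 1 - p := by linarith
  have hq : 0 < q := div_pos hp h1p
  have hqp : q = p + q * p := by linear_combination div_mul_cancel₀ p h1p.ne'
  set F : ℕ → ℝ → ℝ≥0∞ := fun n x => min (h x) n ^ q
  have hFm : ∀ n, Measurable (F n) := fun n => (hh.min measurable_const).pow_const q
  have hFmono : Monotone F := fun m n hmn x => by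
    simp only [F]
    gcongr
  rw [← lintegral_congr fun x => ENNReal.iSup_min_natCast_rpow (h x) hq, lintegral_iSup hFm hFmono]
  refine iSup_le fun n => ?_
  set I := ∫⁻ x in A, F n x
  have hIfin : I ≠ ∞ := by
    refine ne_top_of_le_ne_top
      (ENNReal.mul_ne_top (ENNReal.rpow_ne_top_of_nonneg hq.le (natCast_ne_top n)) hAfin) ?_
    calc I ≤ ∫⁻ _ in A, (n : ℝ≥0∞) ^ q := lintegral_mono fun x =>
          ENNReal.rpow_le_rpow (min_le_right _ _) hq.le
      _ = _ := setLIntegral_const A _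
  rcases eq_or_ne I 0 with hI0 | hI0
  · rw [hI0]; exact zero_le
  have hIle : I ≤ ∫⁻ x in A, h x ^ p * F n x ^ p := lintegral_mono fun x => by
    calc F n x = min (h x) n ^ p * (min (h x) n ^ q) ^ p := by
          rw [← ENNReal.rpow_mul, ← ENNReal.rpow_add_of_nonneg _ _ hp.le (by positivity), ← hqp]
      _ ≤ h x ^ p * F n x ^ p := by gcongr; exact min_le_left _ _
  have key : I ^ (1 / q) * I ≤ M * I := by
    calc I ^ (1 / q) * I = I ^ (1 / p) := by
          nth_rw 2 [← ENNReal.rpow_one I]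
          rw [← ENNReal.rpow_add _ _ hI0 hIfin]
          congr 1
          simp only [q]
          field_simp
          ring
      _ ≤ (∫⁻ x in A, h x ^ p * F n x ^ p) ^ (1 / p) := by gcongr
      _ ≤ M * I := hM (F n) (hFm n) hI0 hIfin
  rwa [ENNReal.mul_le_mul_iff_left hI0 hIfin, one_div, ENNReal.rpow_inv_le_iff hq] at key

lemma wNorm_dualExp_le_of_forall_setLIntegral_rpow_mul_le {p : ℝ} (hp : 0 < p) (hp1 : p ≤ 1)
    {A : Set ℝ} (hA : MeasurableSet A) (hAfin : volume A ≠ ∞) {h : ℝ → ℝ≥0∞} (hh : Measurable h)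
    {M : ℝ≥0∞}
    (hM : ∀ F : ℝ → ℝ≥0∞, Measurable F → ∫⁻ x in A, F x ≠ 0 → ∫⁻ x in A, F x ≠ ∞ →
      (∫⁻ x in A, h x ^ p * F x ^ p) ^ (1 / p) ≤ M * ∫⁻ x in A, F x) :
    wNorm (dualExp p) h A ≤ M := by
  rcases hp1.eq_or_lt with rfl | hp1
  · rw [dualExp_one, wNorm_top]
    refine essSup_le_of_forall_setLIntegral_mul_le hA hAfin hh fun F hF hF0 hFfin => ?_
    simpa using hM F hF hF0 hFfin
  · have hq : 0 < p / (1 - p) := div_pos hp (by linarith)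
    rw [dualExp_of_lt_one hp1, wNorm_ofReal hq, one_div, ENNReal.rpow_inv_le_iff hq]
    exact setLIntegral_rpow_le_of_forall_setLIntegral_rpow_mul_le hp hp1 hAfin hh hM

section Multiplier

variable {X Y : (ℝ → ℝ≥0∞) → ℝ≥0∞} {f g : ℝ → ℝ≥0∞}

lemma div_le_multNorm (hg : Measurable g) (hg0 : ¬ ∀ᵐ x ∂volume.restrict (Ioi 0), g x = 0) :
    Y (fun x => f x * g x) / X g ≤ multNorm X Y f :=
  le_iSup₂ (f := fun g (_ : Measurable g ∧ ¬ ∀ᵐ x ∂volume.restrict (Ioi 0), g x = 0) =>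
    Y (fun x => f x * g x) / X g) g ⟨hg, hg0⟩

lemma multNorm_le {C : ℝ≥0∞} (h : ∀ g, Measurable g → Y (fun x => f x * g x) ≤ C * X g) :
    multNorm X Y f ≤ C :=
  iSup₂_le fun g hg => ENNReal.div_le_of_le_mul (h g hg.1)

end Multiplier

lemma lintegral_Ioi_mul_setLIntegral_Ioo {ψ ρ : ℝ → ℝ≥0∞} (hψ : Measurable ψ) (hρ : Measurable ρ) :
    ∫⁻ t in Ioi 0, (∫⁻ x in Ioo 0 t, ψ x) * ρ t = ∫⁻ x in Ioi 0, ψ x * ∫⁻ t in Ioi x, ρ t := by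
  set K : ℝ → ℝ → ℝ≥0∞ := fun t x => if x < t then ψ x * ρ t else 0
  have hK : Measurable (Function.uncurry K) :=
    Measurable.ite (measurableSet_lt measurable_snd measurable_fst)
      ((hψ.comp measurable_snd).mul (hρ.comp measurable_fst)) measurable_const
  have inner_x : ∀ t, ∫⁻ x in Ioi 0, K t x = (∫⁻ x in Ioo 0 t, ψ x) * ρ t := fun t => by
    rw [← lintegral_mul_const _ hψ, ← Ioi_inter_Iio, inter_comm,
      ← Measure.restrict_restrict measurableSet_Iio,
      ← lintegral_indicator measurableSet_Iio]
    exact lintegral_congr fun x => by by_cases hx : x < t <;> simp [K, hx]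
  have inner_t : ∀ x ∈ Ioi (0 : ℝ), ∫⁻ t in Ioi 0, K t x = ψ x * ∫⁻ t in Ioi x, ρ t :=
    fun x hx => by
      have hsub : Ioi x ⊆ Ioi 0 := Ioi_subset_Ioi (le_of_lt (mem_Ioi.mp hx))
      rw [← lintegral_const_mul _ hρ, ← inter_eq_left.mpr hsub,
        ← Measure.restrict_restrict measurableSet_Ioi,
        ← lintegral_indicator (μ := volume.restrict (Ioi 0)) measurableSet_Ioi]
      exact lintegral_congr fun t => by by_cases ht : x < t <;> simp [K, ht]
  simp_rw [← inner_x]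
  rw [lintegral_lintegral_swap hK.aemeasurable]
  exact setLIntegral_congr_fun measurableSet_Ioi inner_t

lemma cesaroNorm_ofReal_mul {p : ℝ} (hp : 0 < p) {w v f g : ℝ → ℝ≥0∞} (hw : Measurable w)
    (hv : Measurable v) (hf : Measurable f) (hg : Measurable g) :
    cesaroNorm (ENNReal.ofReal p) (ENNReal.ofReal p) w v (fun x => f x * g x) =
      (∫⁻ x in Ioi 0, (f x * ((∫⁻ s in Ioi x, w s ^ p) ^ (1 / p) * v x)) ^ p * g x ^ p) ^
        (1 / p) := by
  have hpow : ∀ a : ℝ≥0∞, (a ^ (1 / p)) ^ p = a := fun a => by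
    rw [← ENNReal.rpow_mul, one_div_mul_cancel hp.ne', ENNReal.rpow_one]
  rw [cesaroNorm, wNorm_ofReal hp]
  congr 1
  calc ∫⁻ t in Ioi 0, (wNorm (ENNReal.ofReal p) (fun x => f x * g x * v x) (Ioo 0 t) * w t) ^ p
      = ∫⁻ t in Ioi 0, (∫⁻ x in Ioo 0 t, (f x * g x * v x) ^ p) * w t ^ p := by
        simp_rw [wNorm_ofReal hp, ENNReal.mul_rpow_of_nonneg _ _ hp.le, hpow]
    _ = ∫⁻ x in Ioi 0, (f x * g x * v x) ^ p * ∫⁻ s in Ioi x, w s ^ p :=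
        lintegral_Ioi_mul_setLIntegral_Ioo (((hf.mul hg).mul hv).pow_const p) (hw.pow_const p)
    _ = _ := by
        simp_rw [ENNReal.mul_rpow_of_nonneg _ _ hp.le, hpow]
        exact lintegral_congr fun x => by ring

lemma copsonNorm_eq {r : ℝ} (hr : 0 < r) (u g : ℝ → ℝ≥0∞) :
    copsonNorm 1 (ENNReal.ofReal r) u (fun _ => 1) g =
      (∫⁻ t in Ioi 0, (∫⁻ x in Ioi t, g x) ^ r * u t ^ r) ^ (1 / r) := by
  simp_rw [copsonNorm, wNorm_ofReal hr, wNorm_one, mul_one, ENNReal.mul_rpow_of_nonneg _ _ hr.le]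

lemma copsonNorm_indicator_Ioo_le {r : ℝ} (hr : 0 < r) {u F : ℝ → ℝ≥0∞} (hu : Measurable u)
    (t : ℝ) :
    copsonNorm 1 (ENNReal.ofReal r) u (fun _ => 1) ((Ioo 0 t).indicator F) ≤
      (∫⁻ x in Ioo 0 t, F x) * (∫⁻ s in Ioo 0 t, u s ^ r) ^ (1 / r) := by
  set I := ∫⁻ x in Ioo 0 t, F x
  have hG : ∀ s ∈ Ioi (0 : ℝ), (∫⁻ x in Ioi s, (Ioo 0 t).indicator F x) ^ r * u s ^ r ≤
      (Ioo 0 t).indicator (fun s => I ^ r * u s ^ r) s := by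
    intro s hs
    by_cases hst : s < t
    · rw [indicator_of_mem (show s ∈ Ioo 0 t from ⟨hs, hst⟩)]
      gcongr
      exact (setLIntegral_le_lintegral _ _).trans (lintegral_indicator measurableSet_Ioo _).le
    · have hzero : ∫⁻ x in Ioi s, (Ioo 0 t).indicator F x = 0 := by
        rw [setLIntegral_congr_fun measurableSet_Ioi fun x (hx : s < x) =>
          indicator_of_notMem (fun hxt => hst (hx.trans hxt.2)) F, lintegral_zero]
      simp [hzero, hr]
  rw [copsonNorm_eq hr]
  calc _ ≤ (∫⁻ s in Ioi 0, (Ioo 0 t).indicator (fun s => I ^ r * u s ^ r) s) ^ (1 / r) := by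
        gcongr ?_ ^ _
        exact setLIntegral_mono' measurableSet_Ioi hG
    _ = (I ^ r * ∫⁻ s in Ioo 0 t, u s ^ r) ^ (1 / r) := by
        rw [lintegral_indicator measurableSet_Ioo, Measure.restrict_restrict measurableSet_Ioo,
          inter_eq_left.mpr Ioo_subset_Ioi_self, lintegral_const_mul _ (hu.pow_const r)]
    _ = I * (∫⁻ s in Ioo 0 t, u s ^ r) ^ (1 / r) := by
        rw [ENNReal.mul_rpow_of_nonneg _ _ (by positivity), ← ENNReal.rpow_mul,
          mul_one_div_cancel hr.ne', ENNReal.rpow_one]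

noncomputable def primitive (φ : ℝ → ℝ≥0∞) (x : ℝ) : ℝ≥0∞ := ∫⁻ s in Ioo 0 x, φ s

section Primitive

variable {φ : ℝ → ℝ≥0∞}

lemma monotone_primitive (φ : ℝ → ℝ≥0∞) : Monotone (primitive φ) := fun _ _ hab =>
  lintegral_mono_set (Ioo_subset_Ioo_right hab)

lemma primitive_zero (φ : ℝ → ℝ≥0∞) : primitive φ 0 = 0 := by simp [primitive]

lemma primitive_add_setLIntegral_Ico {a b : ℝ} (ha : 0 < a) (hab : a ≤ b) :
    primitive φ a + ∫⁻ s in Ico a b, φ s = primitive φ b := by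
  rw [primitive, primitive, ← Ioo_union_Ico_eq_Ioo ha hab,
    lintegral_union measurableSet_Ico (disjoint_left.mpr fun _ hs hs' => hs.2.not_ge hs'.1)]

lemma continuous_primitive (hφ : Measurable φ) (hfin : ∀ x, 0 < x → primitive φ x < ∞) :
    Continuous (primitive φ) := by
  refine continuous_iff_continuousAt.mpr fun x => ?_
  have hlim : ∀ s ≠ x, ∀ᶠ y in 𝓝 x, (Ioo 0 y).indicator φ s = (Ioo 0 x).indicator φ s := by
    intro s hs
    rcases hs.lt_or_gt with hs | hs
    · filter_upwards [eventually_gt_nhds hs] with y hy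
      simp [indicator_apply, hs, hy]
    · filter_upwards [eventually_lt_nhds hs] with y hy
      simp [hs.not_gt, hy.not_gt]
  change Tendsto (fun y => ∫⁻ s in Ioo 0 y, φ s) (𝓝 x) (𝓝 (∫⁻ s in Ioo 0 x, φ s))
  simp_rw [← lintegral_indicator measurableSet_Ioo]
  refine tendsto_lintegral_filter_of_dominated_convergence ((Ioo 0 (max (x + 1) 1)).indicator φ)
    (Eventually.of_forall fun y => hφ.indicator measurableSet_Ioo) ?_ ?_ ?_
  · filter_upwards [eventually_lt_nhds (lt_max_of_lt_left (lt_add_one x))] with y hy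
    exact Eventually.of_forall (indicator_le_indicator_of_subset (Ioo_subset_Ioo_right hy.le)
      fun _ => zero_le)
  · rw [lintegral_indicator measurableSet_Ioo]
    exact (hfin _ (lt_max_of_lt_right one_pos)).ne
  · filter_upwards [Measure.ae_ne volume x] with s hs
    exact tendsto_const_nhds.congr' ((hlim s hs).mono fun _ hy => hy.symm)

end Primitive

/-- Junk value `0` when `U` never reaches `a`. -/
noncomputable def firstHit (U : ℝ → ℝ≥0∞) (a : ℝ≥0∞) : ℝ := sInf {x | a ≤ U x}

section FirstHit

variable {U : ℝ → ℝ≥0∞} {a b : ℝ≥0∞} {x y : ℝ}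

lemma pos_of_le_apply (hmono : Monotone U) (hU0 : U 0 = 0) (ha : 0 < a) (hx : a ≤ U x) : 0 < x :=
  not_le.mp fun hx0 => ha.not_ge (hx.trans ((hmono hx0).trans_eq hU0))

lemma firstHit_le (hmono : Monotone U) (hU0 : U 0 = 0) (ha : 0 < a) (hx : a ≤ U x) :
    firstHit U a ≤ x :=
  csInf_le ⟨0, fun _ hz => (pos_of_le_apply hmono hU0 ha hz).le⟩ hx

variable (hU : Continuous U) (hmono : Monotone U) (hU0 : U 0 = 0)
include hU hmono hU0

lemma apply_firstHit (ha : 0 < a) (hy : a ≤ U y) : U (firstHit U a) = a := by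
  have hmem : firstHit U a ∈ {x | a ≤ U x} :=
    (isClosed_le continuous_const hU).csInf_mem ⟨y, hy⟩
      ⟨0, fun _ hz => (pos_of_le_apply hmono hU0 ha hz).le⟩
  obtain ⟨c, -, hc⟩ := intermediate_value_Icc (pos_of_le_apply hmono hU0 ha hy).le
    hU.continuousOn ⟨hU0 ▸ zero_le, hy⟩
  exact le_antisymm ((hmono (firstHit_le hmono hU0 ha hc.ge)).trans hc.le) hmem

lemma le_apply_iff_firstHit_le (ha : 0 < a) (hy : a ≤ U y) : a ≤ U x ↔ firstHit U a ≤ x :=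
  ⟨firstHit_le hmono hU0 ha, fun hx => (apply_firstHit hU hmono hU0 ha hy).ge.trans (hmono hx)⟩

lemma firstHit_pos (ha : 0 < a) (hy : a ≤ U y) : 0 < firstHit U a :=
  pos_of_le_apply hmono hU0 ha (apply_firstHit hU hmono hU0 ha hy).ge

lemma preimage_Ico_eq_Ico_firstHit (ha : 0 < a) (hab : a ≤ b) (hy : b ≤ U y) :
    U ⁻¹' Ico a b = Ico (firstHit U a) (firstHit U b) := by
  ext x
  simp only [mem_preimage, mem_Ico, ← not_le,
    le_apply_iff_firstHit_le hU hmono hU0 ha (hab.trans hy),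
    le_apply_iff_firstHit_le hU hmono hU0 (ha.trans_le hab) hy]

lemma setLIntegral_preimage_Ici_le (hb : 0 < b) (hy : b ≤ U y) (g : ℝ → ℝ≥0∞) :
    ∫⁻ x in U ⁻¹' Ici b, g x ≤ ∫⁻ x in Ioi (firstHit U b), g x := by
  rw [setLIntegral_congr Ioi_ae_eq_Ici]
  exact lintegral_mono_set fun x hx => (le_apply_iff_firstHit_le hU hmono hU0 hb hy).mp hx

lemma wNorm_Ioo_inter_preimage_Iio_le {q : ℝ≥0∞} {h : ℝ → ℝ≥0∞} {S : ℝ≥0∞} {s : ℝ} (hs : 0 ≤ s)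
    (hS : ∀ t, 0 < t → wNorm q h (Ioo 0 t) ≤ S * U t ^ s) (hb : 0 < b) {n : ℝ} (hn : 0 < n) :
    wNorm q h (Ioo 0 n ∩ U ⁻¹' Iio b) ≤ S * b ^ s := by
  by_cases hbn : b ≤ U n
  · have hsub : Ioo 0 n ∩ U ⁻¹' Iio b ⊆ Ioo 0 (firstHit U b) := fun x hx =>
      ⟨hx.1.1, not_le.mp fun hτx =>
        (not_le.mpr hx.2) ((le_apply_iff_firstHit_le hU hmono hU0 hb hbn).mpr hτx)⟩
    calc _ ≤ wNorm q h (Ioo 0 (firstHit U b)) := wNorm_mono_set q h hsub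
      _ ≤ S * U (firstHit U b) ^ s := hS _ (firstHit_pos hU hmono hU0 hb hbn)
      _ = S * b ^ s := by rw [apply_firstHit hU hmono hU0 hb hbn]
  · calc _ ≤ wNorm q h (Ioo 0 n) := wNorm_mono_set q h inter_subset_left
      _ ≤ S * U n ^ s := hS n hn
      _ ≤ S * b ^ s := by gcongr; exact (not_le.mp hbn).le

end FirstHit

def levelBand (U : ℝ → ℝ≥0∞) (c : ℝ≥0∞) : Set ℝ := U ⁻¹' Ico c (2 * c)

lemma measurableSet_levelBand {U : ℝ → ℝ≥0∞} (hU : Measurable U) (c : ℝ≥0∞) :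
    MeasurableSet (levelBand U c) :=
  hU measurableSet_Ico

lemma pairwise_disjoint_levelBand_two_zpow (U : ℝ → ℝ≥0∞) :
    Pairwise (Function.onFun Disjoint fun k : ℤ => levelBand U (2 ^ k)) := by
  have h := (ENNReal.monotone_zpow (x := 2) one_le_two).pairwise_disjoint_on_Ico_succ
  simp only [Order.succ_eq_add_one, ENNReal.two_zpow_add_one] at h
  exact fun i j hij => (h hij).preimage U

lemma exists_mem_levelBand_two_zpow {U : ℝ → ℝ≥0∞} {x : ℝ} (h0 : U x ≠ 0) (htop : U x ≠ ∞) :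
    ∃ k : ℤ, x ∈ levelBand U (2 ^ k) := by
  obtain ⟨k, hk⟩ := ENNReal.exists_mem_Ico_zpow h0 htop one_lt_two ofNat_ne_top
  rw [ENNReal.two_zpow_add_one] at hk
  exact ⟨k, hk⟩

section UpperBound

variable {p r : ℝ} {φ h g : ℝ → ℝ≥0∞} {S : ℝ≥0∞}

lemma mul_le_setLIntegral_preimage_Ico (hφ : Measurable φ)
    (hfin : ∀ x, 0 < x → primitive φ x < ∞) {a b : ℝ≥0∞} (ha : 0 < a) (hab : a ≤ b) {y : ℝ}
    (hy : b ≤ primitive φ y) {F : ℝ → ℝ≥0∞} (hF : Antitone F) :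
    (b - a) * F (firstHit (primitive φ) b) ≤ ∫⁻ x in primitive φ ⁻¹' Ico a b, F x * φ x := by
  have hU := continuous_primitive hφ hfin
  have hmono := monotone_primitive φ
  have hU0 := primitive_zero φ
  have hay : a ≤ primitive φ y := hab.trans hy
  have hτa := firstHit_pos hU hmono hU0 ha hay
  have hτ : firstHit (primitive φ) a ≤ firstHit (primitive φ) b :=
    firstHit_le hmono hU0 ha (hab.trans (apply_firstHit hU hmono hU0 (ha.trans_le hab) hy).ge)
  have hmass : ∫⁻ x in Ico (firstHit (primitive φ) a) (firstHit (primitive φ) b), φ x = b - a := by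
    have hadd := primitive_add_setLIntegral_Ico (φ := φ) hτa hτ
    rw [apply_firstHit hU hmono hU0 ha hay,
      apply_firstHit hU hmono hU0 (ha.trans_le hab) hy, add_comm] at hadd
    exact ENNReal.eq_sub_of_add_eq (apply_firstHit hU hmono hU0 ha hay ▸ (hfin _ hτa).ne) hadd
  rw [preimage_Ico_eq_Ico_firstHit hU hmono hU0 ha hab hy, ← hmass, mul_comm,
    ← lintegral_const_mul _ hφ]
  exact setLIntegral_mono' measurableSet_Ico fun x hx => by gcongr; exact hF hx.2.le

lemma setLIntegral_Ioo_inter_levelBand_le (hp : 0 < p) (hp1 : p ≤ 1) (hr : 0 < r)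
    (hφ : Measurable φ) (hfin : ∀ x, 0 < x → primitive φ x < ∞) (hh : Measurable h)
    (hg : Measurable g)
    (hS : ∀ t, 0 < t → wNorm (dualExp p) h (Ioo 0 t) ≤ S * primitive φ t ^ (1 / r))
    {n : ℝ} (hn : 0 < n) {c : ℝ≥0∞} (hc : 0 < c) (hctop : c ≠ ∞) :
    ∫⁻ x in Ioo 0 n ∩ levelBand (primitive φ) (2 * c), h x ^ p * g x ^ p ≤
      S ^ p * (4 * ∫⁻ x in levelBand (primitive φ) c, (∫⁻ y in Ioi x, g y) ^ r * φ x) ^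
        (p / r) := by
  set U := primitive φ
  set E := Ioo 0 n ∩ levelBand U (2 * c)
  rcases E.eq_empty_or_nonempty with hE | ⟨y, -, hy⟩
  · simp [hE]
  have hU := continuous_primitive hφ hfin
  have hmono := monotone_primitive φ
  have hU0 := primitive_zero φ
  set G : ℝ → ℝ≥0∞ := fun x => ∫⁻ y in Ioi x, g y
  set τ := firstHit U (2 * c)
  have hw : wNorm (dualExp p) h E ≤ S * (4 * c) ^ (1 / r) := by
    rw [show 4 * c = 2 * (2 * c) by ring]
    exact (wNorm_mono_set _ _ (show E ⊆ Ioo 0 n ∩ U ⁻¹' Iio (2 * (2 * c)) from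
      fun x hx => ⟨hx.1, hx.2.2⟩)).trans
      (wNorm_Ioo_inter_preimage_Iio_le hU hmono hU0 (by positivity) hS (by positivity) hn)
  have hgE : ∫⁻ x in E, g x ≤ G τ :=
    (lintegral_mono_set fun x hx => hx.2.1).trans
      (setLIntegral_preimage_Ici_le hU hmono hU0 (by positivity) hy.1 g)
  have hband : c * G τ ^ r ≤ ∫⁻ x in levelBand U c, G x ^ r * φ x := by
    have key := mul_le_setLIntegral_preimage_Ico hφ hfin hc
      (le_mul_of_one_le_left zero_le one_le_two) hy.1 (F := fun x => G x ^ r)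
      fun a b hab => ENNReal.rpow_le_rpow (lintegral_mono_set (Ioi_subset_Ioi hab)) hr.le
    rwa [two_mul, ENNReal.add_sub_cancel_right hctop, ← two_mul] at key
  calc ∫⁻ x in E, h x ^ p * g x ^ p ≤ (S * (4 * c) ^ (1 / r) * ∫⁻ x in E, g x) ^ p :=
        setLIntegral_rpow_mul_rpow_le hp hp1 hh hg hw
    _ ≤ (S * (4 * c) ^ (1 / r) * G τ) ^ p := by gcongr
    _ = S ^ p * (4 * (c * G τ ^ r)) ^ (p / r) := by
        rw [← mul_assoc 4, ENNReal.mul_rpow_of_nonneg _ _ hp.le,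
          ENNReal.mul_rpow_of_nonneg _ _ hp.le,
          ENNReal.mul_rpow_of_nonneg _ _ (div_nonneg hp.le hr.le), ← ENNReal.rpow_mul,
          ← ENNReal.rpow_mul, one_div_mul_eq_div, mul_div_cancel₀ p hr.ne', mul_assoc]
    _ ≤ _ := by gcongr

lemma setLIntegral_Ioo_rpow_mul_rpow_le (hr : 0 < r) (hrp : r ≤ p) (hp1 : p ≤ 1)
    (hφ : Measurable φ) (hpos : ∀ x, 0 < x → 0 < primitive φ x)
    (hfin : ∀ x, 0 < x → primitive φ x < ∞) (hh : Measurable h) (hg : Measurable g)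
    (hS : ∀ t, 0 < t → wNorm (dualExp p) h (Ioo 0 t) ≤ S * primitive φ t ^ (1 / r))
    {n : ℝ} (hn : 0 < n) :
    ∫⁻ x in Ioo 0 n, h x ^ p * g x ^ p ≤
      S ^ p * (4 * ∫⁻ x in Ioi 0, (∫⁻ y in Ioi x, g y) ^ r * φ x) ^ (p / r) := by
  have hp : 0 < p := hr.trans_le hrp
  set U := primitive φ
  set c : ℤ → ℝ≥0∞ := fun k => ∫⁻ x in levelBand U (2 ^ k), (∫⁻ y in Ioi x, g y) ^ r * φ x
  have hcover : Ioo 0 n ⊆ ⋃ k : ℤ, Ioo 0 n ∩ levelBand U (2 * 2 ^ k) := fun x hx => by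
    obtain ⟨k, hk⟩ := exists_mem_levelBand_two_zpow (hpos x hx.1).ne' (hfin x hx.1).ne
    refine mem_iUnion.mpr ⟨k - 1, hx, ?_⟩
    rwa [← ENNReal.two_zpow_add_one, sub_add_cancel]
  have hsum : ∑' k, c k ≤ ∫⁻ x in Ioi 0, (∫⁻ y in Ioi x, g y) ^ r * φ x := by
    rw [← lintegral_iUnion (fun k => measurableSet_levelBand (monotone_primitive φ).measurable _)
      (pairwise_disjoint_levelBand_two_zpow U)]
    refine lintegral_mono_set (iUnion_subset fun k x hx => ?_)
    exact pos_of_le_apply (monotone_primitive φ) (primitive_zero φ)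
      (ENNReal.zpow_pos two_ne_zero ofNat_ne_top k) hx.1
  calc ∫⁻ x in Ioo 0 n, h x ^ p * g x ^ p
      ≤ ∫⁻ x in ⋃ k : ℤ, Ioo 0 n ∩ levelBand U (2 * 2 ^ k), h x ^ p * g x ^ p :=
        lintegral_mono_set hcover
    _ ≤ ∑' k : ℤ, ∫⁻ x in Ioo 0 n ∩ levelBand U (2 * 2 ^ k), h x ^ p * g x ^ p :=
        lintegral_iUnion_le _ _
    _ ≤ ∑' k, S ^ p * (4 * c k) ^ (p / r) := ENNReal.tsum_le_tsum fun k =>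
        setLIntegral_Ioo_inter_levelBand_le hp hp1 hr hφ hfin hh hg hS hn
          (ENNReal.zpow_pos two_ne_zero ofNat_ne_top k)
          (ENNReal.zpow_lt_top two_ne_zero ofNat_ne_top k).ne
    _ = S ^ p * ∑' k, (4 * c k) ^ (p / r) := ENNReal.tsum_mul_left
    _ ≤ S ^ p * (∑' k, 4 * c k) ^ (p / r) := by
        gcongr
        exact ENNReal.tsum_rpow_le_rpow_tsum ((one_le_div hr).mpr hrp) _
    _ ≤ _ := by
        rw [ENNReal.tsum_mul_left]
        gcongr

lemma lintegral_rpow_mul_rpow_le (hr : 0 < r) (hrp : r ≤ p) (hp1 : p ≤ 1)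
    (hφ : Measurable φ) (hpos : ∀ x, 0 < x → 0 < primitive φ x)
    (hfin : ∀ x, 0 < x → primitive φ x < ∞) (hh : Measurable h) (hg : Measurable g)
    (hS : ∀ t, 0 < t → wNorm (dualExp p) h (Ioo 0 t) ≤ S * primitive φ t ^ (1 / r)) :
    (∫⁻ x in Ioi 0, h x ^ p * g x ^ p) ^ (1 / p) ≤
      4 ^ (1 / r) * S * (∫⁻ x in Ioi 0, (∫⁻ y in Ioi x, g y) ^ r * φ x) ^ (1 / r) := by
  have hp : 0 < p := hr.trans_le hrp
  have hIoi : Ioi (0 : ℝ) = ⋃ n : ℕ, Ioo 0 ((n : ℝ) + 1) := by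
    ext x
    simp only [mem_Ioi, mem_iUnion, mem_Ioo]
    exact ⟨fun hx => (exists_nat_gt x).imp fun n hn => ⟨hx, hn.trans (lt_add_one _)⟩,
      fun ⟨_, hx, _⟩ => hx⟩
  have hmono : Monotone fun n : ℕ => Ioo (0 : ℝ) ((n : ℝ) + 1) := fun m n hmn =>
    Ioo_subset_Ioo_right (by gcongr)
  have hbound : ∫⁻ x in Ioi 0, h x ^ p * g x ^ p ≤
      S ^ p * (4 * ∫⁻ x in Ioi 0, (∫⁻ y in Ioi x, g y) ^ r * φ x) ^ (p / r) := by
    nth_rw 1 [hIoi]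
    rw [setLIntegral_iUnion_of_directed _ hmono.directed_le]
    exact iSup_le fun n =>
      setLIntegral_Ioo_rpow_mul_rpow_le hr hrp hp1 hφ hpos hfin hh hg hS n.cast_add_one_pos
  calc _ ≤ (S ^ p * (4 * ∫⁻ x in Ioi 0, (∫⁻ y in Ioi x, g y) ^ r * φ x) ^ (p / r)) ^ (1 / p) := by
        gcongr
    _ = _ := by
        rw [ENNReal.mul_rpow_of_nonneg _ _ (by positivity), ← ENNReal.rpow_mul, ← ENNReal.rpow_mul,
          mul_one_div_cancel hp.ne', ENNReal.rpow_one, show p / r * (1 / p) = 1 / r by field_simp,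
          ENNReal.mul_rpow_of_nonneg _ _ (by positivity)]
        ring

end UpperBound

lemma MemOmegaDual.setLIntegral_rpow_pos_lt_top {r : ℝ} (hr : 0 < r) {u : ℝ → ℝ≥0∞}
    (hu : MemOmegaDual (ENNReal.ofReal r) u) {t : ℝ} (ht : 0 < t) :
    0 < ∫⁻ s in Ioo 0 t, u s ^ r ∧ ∫⁻ s in Ioo 0 t, u s ^ r < ∞ := by
  obtain ⟨hpos, hfin⟩ := hu.2 t ht
  rw [wNorm_ofReal hr] at hpos hfin
  exact ⟨pos_iff_ne_zero.mpr fun h0 => by simp [h0, hr] at hpos,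
    (ENNReal.rpow_lt_top_iff_of_pos (by positivity)).mp hfin⟩

section MultiplierBounds

variable {p r : ℝ} {u f h : ℝ → ℝ≥0∞} {Y : (ℝ → ℝ≥0∞) → ℝ≥0∞}

lemma multNorm_copsonNorm_le (hr : 0 < r) (hrp : r ≤ p) (hp1 : p ≤ 1) (hu : Measurable u)
    (hh : Measurable h) (hpos : ∀ t, 0 < t → 0 < ∫⁻ s in Ioo 0 t, u s ^ r)
    (hfin : ∀ t, 0 < t → ∫⁻ s in Ioo 0 t, u s ^ r < ∞)
    (hY : ∀ g, Measurable g → Y (fun x => f x * g x) = (∫⁻ x in Ioi 0, h x ^ p * g x ^ p) ^ (1 / p))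
    {S : ℝ≥0∞}
    (hS : ∀ t, 0 < t → wNorm (dualExp p) h (Ioo 0 t) ≤ S * (∫⁻ s in Ioo 0 t, u s ^ r) ^ (1 / r)) :
    multNorm (copsonNorm 1 (ENNReal.ofReal r) u fun _ => 1) Y f ≤ 4 ^ (1 / r) * S :=
  multNorm_le fun g hg => by
    rw [hY g hg, copsonNorm_eq hr]
    exact lintegral_rpow_mul_rpow_le hr hrp hp1 (hu.pow_const r) hpos hfin hh hg hS

lemma wNorm_dualExp_le_mul_multNorm (hp : 0 < p) (hp1 : p ≤ 1) (hr : 0 < r) (hu : Measurable u)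
    (hh : Measurable h)
    (hY : ∀ g, Measurable g → Y (fun x => f x * g x) = (∫⁻ x in Ioi 0, h x ^ p * g x ^ p) ^ (1 / p))
    {t : ℝ} (hU0 : ∫⁻ s in Ioo 0 t, u s ^ r ≠ 0) (hUtop : ∫⁻ s in Ioo 0 t, u s ^ r ≠ ∞) :
    wNorm (dualExp p) h (Ioo 0 t) ≤
      (∫⁻ s in Ioo 0 t, u s ^ r) ^ (1 / r) *
        multNorm (copsonNorm 1 (ENNReal.ofReal r) u fun _ => 1) Y f := by
  set L := multNorm (copsonNorm 1 (ENNReal.ofReal r) u fun _ => 1) Y f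
  set V := (∫⁻ s in Ioo 0 t, u s ^ r) ^ (1 / r)
  have hV0 : V ≠ 0 := (ENNReal.rpow_pos (pos_iff_ne_zero.mpr hU0) hUtop).ne'
  have hVtop : V ≠ ∞ := ENNReal.rpow_ne_top_of_nonneg (by positivity) hUtop
  refine wNorm_dualExp_le_of_forall_setLIntegral_rpow_mul_le hp hp1 measurableSet_Ioo
    (by simp [Real.volume_Ioo]) hh fun F hF hI0 hFfin => ?_
  set I := ∫⁻ x in Ioo 0 t, F x
  rcases eq_or_ne L ∞ with hL | hL
  · rw [hL, ENNReal.mul_top hV0, ENNReal.top_mul hI0]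
    exact le_top
  set g := (Ioo 0 t).indicator F
  have hgI : ∫⁻ x in Ioi 0, g x = I := by
    rw [lintegral_indicator measurableSet_Ioo, Measure.restrict_restrict measurableSet_Ioo,
      inter_eq_left.mpr Ioo_subset_Ioi_self]
  have hg0 : ¬ ∀ᵐ x ∂volume.restrict (Ioi 0), g x = 0 := fun hae =>
    hI0 (hgI ▸ (lintegral_congr_ae hae).trans lintegral_zero)
  have hind : ∀ x, h x ^ p * g x ^ p = (Ioo 0 t).indicator (fun x => h x ^ p * F x ^ p) x :=
    fun x => by by_cases hx : x ∈ Ioo 0 t <;> simp [g, hx, hp]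
  have hYg : Y (fun x => f x * g x) = (∫⁻ x in Ioo 0 t, h x ^ p * F x ^ p) ^ (1 / p) := by
    rw [hY g (hF.indicator measurableSet_Ioo), lintegral_congr hind,
      lintegral_indicator measurableSet_Ioo, Measure.restrict_restrict measurableSet_Ioo,
      inter_eq_left.mpr Ioo_subset_Ioi_self]
  have hXg := copsonNorm_indicator_Ioo_le hr hu (F := F) t
  calc _ = Y (fun x => f x * g x) := hYg.symm
    _ ≤ L * copsonNorm 1 (ENNReal.ofReal r) u (fun _ => 1) g :=
        (ENNReal.div_le_iff_le_mul (Or.inr hL)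
          (Or.inl (ne_top_of_le_ne_top (ENNReal.mul_ne_top hFfin hVtop) hXg))).mp
          (div_le_multNorm (hF.indicator measurableSet_Ioo) hg0)
    _ ≤ L * (I * V) := by gcongr
    _ = V * L * I := by ring

end MultiplierBounds

theorem multiplier_q_eq_p_r_le_p_general (p r : ℝ) (hr : 0 < r) (hrp : r ≤ p) (hp1 : p ≤ 1) :
    ∃ c C : ℝ≥0∞, 0 < c ∧ c < ∞ ∧ 0 < C ∧ C < ∞ ∧
      ∀ u v w : ℝ → ℝ≥0∞, IsWeightOn v → MemOmegaDual (ENNReal.ofReal r) u →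
        MemOmega (ENNReal.ofReal p) w →
        ∀ f : ℝ → ℝ≥0∞, Measurable f →
          let ω₂ : ℝ → ℝ≥0∞ := fun x => (∫⁻ s in Ioi x, w s ^ p) ^ (1 / p) * v x
          let lhs := multNorm (copsonNorm 1 (ENNReal.ofReal r) u (fun _ => 1))
            (cesaroNorm (ENNReal.ofReal p) (ENNReal.ofReal p) w v) f
          let rhs := ⨆ t ∈ Ioi (0:ℝ),
            (∫⁻ s in Ioo (0:ℝ) t, u s ^ r) ^ (-(1 / r)) *
              wNorm (dualExp p) (fun x => f x * ω₂ x) (Ioo 0 t)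
          c * rhs ≤ lhs ∧ lhs ≤ C * rhs := by
  have hp : 0 < p := hr.trans_le hrp
  refine ⟨1, 4 ^ (1 / r), one_pos, one_lt_top, by positivity,
    ENNReal.rpow_lt_top_of_nonneg (by positivity) ofNat_ne_top, ?_⟩
  intro u v w hv hu hw f hf ω₂ lhs rhs
  have hU := fun t (ht : 0 < t) => hu.setLIntegral_rpow_pos_lt_top hr ht
  have hω₂ : Measurable ω₂ := ((Antitone.measurable fun _ _ hab =>
    lintegral_mono_set (Ioi_subset_Ioi hab)).pow_const _).mul hv.1
  have hY := fun g (hg : Measurable g) => cesaroNorm_ofReal_mul hp hw.1 hv.1 hf hg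
  constructor
  · rw [one_mul]
    refine iSup₂_le fun t ht => ?_
    rw [ENNReal.rpow_neg_mul_le_iff (hU t ht).1.ne' (hU t ht).2.ne (by positivity)]
    exact wNorm_dualExp_le_mul_multNorm hp hp1 hr hu.1 (hf.mul hω₂) hY
      (hU t ht).1.ne' (hU t ht).2.ne
  · refine multNorm_copsonNorm_le hr hrp hp1 hu.1 (hf.mul hω₂) (fun t ht => (hU t ht).1)
      (fun t ht => (hU t ht).2) hY fun t ht => ?_
    rw [mul_comm rhs, ← ENNReal.rpow_neg_mul_le_iff (hU t ht).1.ne' (hU t ht).2.ne (by positivity)]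
    exact le_iSup₂ (f := fun t (_ : t ∈ Ioi (0 : ℝ)) =>
      (∫⁻ s in Ioo (0 : ℝ) t, u s ^ r) ^ (-(1 / r)) *
        wNorm (dualExp p) (fun x => f x * ω₂ x) (Ioo 0 t)) t ht

/-- Multipliers from `Cop_r(u)` to `Ces_{p,p}(w,v)` for `0 < r ≤ p ≤ 1`, `r ≠ 1`:
`‖f‖_{M(Cop_r(u), Ces_{p,p}(w,v))} ≈ sup_{t>0} (∫_0^t u^r)^{−1/r} ‖f·ω₂‖_{p',(0,t)}`,
where `ω₂(x) = (∫_x^∞ w^p)^{1/p} v(x)`, with constants depending only on `p` and `r`. -/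
theorem multiplier_q_eq_p_r_le_p (p r : ℝ) (hr : 0 < r) (hrp : r ≤ p) (hp1 : p ≤ 1)
    (hr1 : r ≠ 1) :
    ∃ c C : ℝ≥0∞, 0 < c ∧ c < ∞ ∧ 0 < C ∧ C < ∞ ∧
      ∀ u v w : ℝ → ℝ≥0∞, IsWeightOn v → MemOmegaDual (ENNReal.ofReal r) u →
        MemOmega (ENNReal.ofReal p) w →
        ∀ f : ℝ → ℝ≥0∞, Measurable f →
          let ω₂ : ℝ → ℝ≥0∞ := fun x => (∫⁻ s in Ioi x, w s ^ p) ^ (1 / p) * v x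
          let lhs := multNorm (copsonNorm 1 (ENNReal.ofReal r) u (fun _ => 1))
            (cesaroNorm (ENNReal.ofReal p) (ENNReal.ofReal p) w v) f
          let rhs := ⨆ t ∈ Ioi (0:ℝ),
            (∫⁻ s in Ioo (0:ℝ) t, u s ^ r) ^ (-(1 / r)) *
              wNorm (dualExp p) (fun x => f x * ω₂ x) (Ioo 0 t)
          c * rhs ≤ lhs ∧ lhs ≤ C * rhs :=
  multiplier_q_eq_p_r_le_p_general p r hr hrp hp1
end

section
/- Let 0 < r < 1 < q < ∞. Let v be a weight on (0,∞), u ∈ Ω̃_r and w ∈ Ω_q. Then for every nonnegative measurable f on (0,∞), ‖f‖_{M(Cop_r(u), Ces_{1,q}(w,v))} ≈ ess sup_{x∈(0,∞)} f(x) v(x) (∫_0^x u(σ)^r dσ)^{−1/r} (∫_x^∞ w(σ)^q dσ)^{1/q}, with equivalence constants depending only on q and r. -/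
open MeasureTheory ENNReal Set Filter

/-!
Write `U x = ∫_0^x u^r`, `W x = ∫_x^∞ w^q` and `ρ = U^{1/r} / W^{1/q}`, so that `f v = Φ ρ` where
`Φ = f v U^{-1/r} W^{1/q}` is the function whose essential supremum is the right-hand side.

Upper bound, with constant `1/r`: for a test function `g`, `∫_0^t f g v ≤ ‖Φ‖_∞ ∫_0^t g ρ`.
Minkowski's integral inequality bounds the `L^q(w^q)` norm of `t ↦ ∫_0^t g ρ` by
`∫ g ρ W^{1/q} = ∫ g U^{1/r}`, and for `r < 1` the reverse Hardy inequality
`∫ g U^{1/r} ≤ (1/r) (∫ u^r G^r)^{1/r}`, `G t = ∫_t^∞ g`, bounds this by the Copson norm of `g`.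
The latter follows from the layer cake formula for `∫ g U^{1/r}` and the elementary estimate
`G(y)^r U(y) ≤ ∫ u^r G^r`, which controls both the size and the distribution of the masses
`∫_{U > τ} g`.

Lower bound, with constant `1`: testing the multiplier on the indicator of `{Φ > c}` near one of
its density points `x₀`, cut down to `(a, b) ∋ x₀`, gives the ratio `c ρ(a) / ρ(b)`, which tends to
`c` as `(a, b)` shrinks to `x₀` because `U` and `W` are continuous there.
-/

open Topology

lemma ENNReal.rpow_mul_le_of_forall_lt {a b c : ℝ≥0∞} {r : ℝ} (hr : 0 < r) (hc : c ≠ ∞)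
    (h : ∀ a' < a, a' ^ r * c ≤ b) : a ^ r * c ≤ b := by
  rcases eq_or_ne a 0 with rfl | ha
  · simp [ENNReal.zero_rpow_of_pos hr]
  have : (𝓝[<] a).NeBot := nhdsLT_neBot_of_exists_lt ⟨0, pos_iff_ne_zero.2 ha⟩
  refine le_of_tendsto ?_ (eventually_nhdsWithin_of_forall (s := Iio a) (a := a) h)
  exact (ENNReal.Tendsto.mul_const (ENNReal.continuous_rpow_const.tendsto a) (Or.inr hc)).mono_left
    nhdsWithin_le_nhds

lemma ENNReal.mul_rpow_sub_one_le {a b c : ℝ≥0∞} {r : ℝ} (hr : 0 < r) (hr1 : r ≤ 1)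
    (h : a ^ r * b ≤ c) : a * b ^ (1 / r - 1) ≤ c ^ (1 / r - 1) * a ^ r := by
  have hs : 0 ≤ 1 / r - 1 := by rw [sub_nonneg, le_div_iff₀ hr, one_mul]; exact hr1
  have ha : a = a ^ r * (a ^ r) ^ (1 / r - 1) := by
    rw [← ENNReal.rpow_mul, ← ENNReal.rpow_add_of_nonneg _ _ hr.le (by positivity)]
    field_simp
    ring_nf
    rw [ENNReal.rpow_one]
  calc a * b ^ (1 / r - 1) = a ^ r * (a ^ r * b) ^ (1 / r - 1) := by
        rw [ENNReal.mul_rpow_of_nonneg _ _ hs, ← mul_assoc, ← ha]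
    _ ≤ a ^ r * c ^ (1 / r - 1) := by gcongr
    _ = c ^ (1 / r - 1) * a ^ r := mul_comm _ _

lemma ENNReal.rpow_le_of_le_mul_rpow {S A : ℝ≥0∞} {p q : ℝ} (hpq : p.HolderConjugate q)
    (hS : S ≠ ∞) (h : S ≤ A * S ^ (1 / q)) : S ^ (1 / p) ≤ A := by
  rcases eq_or_ne S 0 with rfl | hS0
  · rw [ENNReal.zero_rpow_of_pos (one_div_pos.2 hpq.pos)]
    exact zero_le
  have hsplit : S ^ (1 / p) * S ^ (1 / q) = S := by
    rw [← ENNReal.rpow_add _ _ hS0 hS, one_div, one_div, hpq.inv_add_inv_eq_one, ENNReal.rpow_one]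
  refine (ENNReal.mul_le_mul_iff_left ?_ ?_).1 (hsplit.trans_le h)
  · exact (ENNReal.rpow_pos (pos_iff_ne_zero.2 hS0) hS).ne'
  · exact ENNReal.rpow_ne_top_of_nonneg (one_div_pos.2 hpq.symm.pos).le hS

theorem lintegral_eq_lintegral_meas_ofReal_lt {α : Type*} [MeasurableSpace α] (μ : Measure α)
    [SFinite μ] {F : α → ℝ≥0∞} (hF : Measurable F) :
    ∫⁻ x, F x ∂μ = ∫⁻ t in Ioi (0 : ℝ), μ {x | ENNReal.ofReal t < F x} := by
  have hlevel : ∀ a : ℝ≥0∞,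
      ∫⁻ t in Ioi (0 : ℝ), {t : ℝ | ENNReal.ofReal t < a}.indicator 1 t = a := by
    intro a
    rw [lintegral_indicator_one (measurableSet_lt ENNReal.measurable_ofReal measurable_const),
      Measure.restrict_apply (measurableSet_lt ENNReal.measurable_ofReal measurable_const)]
    rcases eq_or_ne a ∞ with rfl | ha
    · simp
    · have : {t : ℝ | ENNReal.ofReal t < a} ∩ Ioi 0 = Ioo 0 a.toReal := by
        ext t
        simp only [mem_inter_iff, mem_ofPred_eq, mem_Ioi, mem_Ioo]
        constructor
        · rintro ⟨h, ht⟩; exact ⟨ht, (ENNReal.ofReal_lt_iff_lt_toReal ht.le ha).1 h⟩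
        · rintro ⟨ht, h⟩; exact ⟨(ENNReal.ofReal_lt_iff_lt_toReal ht.le ha).2 h, ht⟩
      rw [this, Real.volume_Ioo, sub_zero, ENNReal.ofReal_toReal ha]
  have hmeas : Measurable (Function.uncurry fun (x : α) (t : ℝ) =>
      {t : ℝ | ENNReal.ofReal t < F x}.indicator (1 : ℝ → ℝ≥0∞) t) := by
    have : MeasurableSet {p : α × ℝ | ENNReal.ofReal p.2 < F p.1} :=
      measurableSet_lt (ENNReal.measurable_ofReal.comp measurable_snd) (hF.comp measurable_fst)
    exact measurable_const.indicator this
  calc ∫⁻ x, F x ∂μ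
      = ∫⁻ x, (∫⁻ t in Ioi (0 : ℝ), {t : ℝ | ENNReal.ofReal t < F x}.indicator 1 t) ∂μ := by
        simp_rw [hlevel]
    _ = ∫⁻ t in Ioi (0 : ℝ), ∫⁻ x, {x | ENNReal.ofReal t < F x}.indicator 1 x ∂μ :=
        lintegral_lintegral_swap hmeas.aemeasurable
    _ = ∫⁻ t in Ioi (0 : ℝ), μ {x | ENNReal.ofReal t < F x} := by
        simp_rw [lintegral_indicator_one (measurableSet_lt measurable_const hF)]

theorem lintegral_le_lintegral_of_forall_meas_lt_le {α β : Type*} [MeasurableSpace α]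
    [MeasurableSpace β] {μ : Measure α} {ν : Measure β} [SFinite μ] [SFinite ν]
    {F₁ : α → ℝ≥0∞} {F₂ : β → ℝ≥0∞} (h₁ : Measurable F₁) (h₂ : Measurable F₂)
    (h : ∀ s, μ {x | s < F₁ x} ≤ ν {y | s < F₂ y}) : ∫⁻ x, F₁ x ∂μ ≤ ∫⁻ y, F₂ y ∂ν := by
  rw [lintegral_eq_lintegral_meas_ofReal_lt μ h₁, lintegral_eq_lintegral_meas_ofReal_lt ν h₂]
  exact lintegral_mono fun t => h _

lemma exists_lt_lintegral_Ioi_of_lt {g : ℝ → ℝ≥0∞} {a : ℝ} {c : ℝ≥0∞}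
    (h : c < ∫⁻ x in Ioi a, g x) : ∃ y, a < y ∧ c < ∫⁻ x in Ioi y, g x := by
  obtain ⟨u, hu_anti, hu_gt, hu_lim⟩ := exists_seq_strictAnti_tendsto a
  rw [← iUnion_Ici_eq_Ioi_of_lt_of_tendsto hu_gt hu_lim,
    ← withDensity_apply _ (MeasurableSet.iUnion fun n => measurableSet_Ici),
    Monotone.measure_iUnion fun m n hmn => Ici_subset_Ici.2 (hu_anti.antitone hmn),
    lt_iSup_iff] at h
  obtain ⟨n, hn⟩ := h
  refine ⟨u n, hu_gt n, ?_⟩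
  rwa [withDensity_apply _ measurableSet_Ici, setLIntegral_congr Ioi_ae_eq_Ici.symm] at hn

lemma lintegral_Ioi_zero_le_of_forall_Ioo_le {F : ℝ → ℝ≥0∞} {C : ℝ≥0∞}
    (h : ∀ a b : ℝ, 0 < a → 0 < b → ∫⁻ t in Ioo a b, F t ≤ C) : ∫⁻ t in Ioi 0, F t ≤ C := by
  have hunion : ⋃ c : ℝ, Ioo (Real.exp (-c)) (Real.exp c) = Ioi 0 := by
    ext x
    simp only [mem_iUnion, mem_Ioo, mem_Ioi]
    refine ⟨fun ⟨c, hc, _⟩ => (Real.exp_pos _).trans hc, fun hx => ⟨|Real.log x| + 1, ?_, ?_⟩⟩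
    · calc Real.exp (-(|Real.log x| + 1)) < Real.exp (Real.log x) :=
            Real.exp_lt_exp.2 (by linarith [neg_abs_le (Real.log x)])
        _ = x := Real.exp_log hx
    · calc x = Real.exp (Real.log x) := (Real.exp_log hx).symm
        _ < Real.exp (|Real.log x| + 1) :=
            Real.exp_lt_exp.2 (by linarith [le_abs_self (Real.log x)])
  have hmono : Monotone fun c : ℝ => Ioo (Real.exp (-c)) (Real.exp c) := fun c c' hcc' =>
    Ioo_subset_Ioo (Real.exp_le_exp.2 (neg_le_neg hcc')) (Real.exp_le_exp.2 hcc')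
  rw [← withDensity_apply _ measurableSet_Ioi, ← hunion, hmono.measure_iUnion]
  exact iSup_le fun c => (withDensity_apply _ measurableSet_Ioo).trans_le
    (h _ _ (Real.exp_pos _) (Real.exp_pos _))

lemma continuousAt_setLIntegral {φ : ℝ → ℝ≥0∞} (hφ : Measurable φ) {S : ℝ → Set ℝ} {T : Set ℝ}
    {x₀ : ℝ} (hS : ∀ x, MeasurableSet (S x)) (hT : MeasurableSet T)
    (hST : ∀ᶠ x in 𝓝 x₀, S x ⊆ T) (hT_fin : ∫⁻ y in T, φ y ≠ ∞)
    (hlim : ∀ᵐ y, ∀ᶠ x in 𝓝 x₀, (y ∈ S x ↔ y ∈ S x₀)) :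
    ContinuousAt (fun x => ∫⁻ y in S x, φ y) x₀ := by
  simp only [ContinuousAt, ← lintegral_indicator (hS _)]
  refine tendsto_lintegral_filter_of_dominated_convergence (T.indicator φ)
    (Eventually.of_forall fun x => hφ.indicator (hS x))
    (hST.mono fun x hx =>
      Eventually.of_forall (indicator_le_indicator_of_subset hx fun _ => zero_le))
    (by rwa [lintegral_indicator hT]) ?_
  filter_upwards [hlim] with y hy
  refine tendsto_const_nhds.congr' (hy.mono fun x hx => ?_)
  by_cases h : y ∈ S x₀ <;> simp [indicator, h, hx.mpr, mt hx.mp]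

noncomputable def headIntegral (φ : ℝ → ℝ≥0∞) (x : ℝ) : ℝ≥0∞ := ∫⁻ σ in Ioo 0 x, φ σ

noncomputable def tailIntegral (φ : ℝ → ℝ≥0∞) (x : ℝ) : ℝ≥0∞ := ∫⁻ σ in Ioi x, φ σ

lemma monotone_headIntegral (φ : ℝ → ℝ≥0∞) : Monotone (headIntegral φ) :=
  fun _ _ h => lintegral_mono_set (Ioo_subset_Ioo_right h)

lemma antitone_tailIntegral (φ : ℝ → ℝ≥0∞) : Antitone (tailIntegral φ) :=
  fun _ _ h => lintegral_mono_set (Ioi_subset_Ioi h)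

lemma headIntegral_of_nonpos (φ : ℝ → ℝ≥0∞) {x : ℝ} (hx : x ≤ 0) : headIntegral φ x = 0 := by
  simp [headIntegral, Ioo_eq_empty (not_lt.2 hx)]

lemma lintegral_mul_headIntegral {k h : ℝ → ℝ≥0∞} (hk : Measurable k) (hh : Measurable h) :
    ∫⁻ t, k t * headIntegral h t = ∫⁻ x in Ioi 0, h x * tailIntegral k x := by
  have hset : MeasurableSet {p : ℝ × ℝ | p.2 ∈ Ioo 0 p.1} :=
    (measurableSet_lt measurable_const measurable_snd).inter
      (measurableSet_lt measurable_snd measurable_fst)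
  have hmeas :
      Measurable (Function.uncurry fun t x => (Ioo 0 t).indicator (fun x => k t * h x) x) :=
    ((hk.comp measurable_fst).mul (hh.comp measurable_snd)).indicator hset
  calc ∫⁻ t, k t * headIntegral h t
      = ∫⁻ t, ∫⁻ x, (Ioo 0 t).indicator (fun x => k t * h x) x := by
        refine lintegral_congr fun t => ?_
        rw [lintegral_indicator measurableSet_Ioo, lintegral_const_mul _ hh, headIntegral]
    _ = ∫⁻ x, ∫⁻ t, (Ioo 0 t).indicator (fun x => k t * h x) x :=
        lintegral_lintegral_swap hmeas.aemeasurable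
    _ = ∫⁻ x, (Ioi 0).indicator (fun x => h x * tailIntegral k x) x := by
        refine lintegral_congr fun x => ?_
        by_cases hx : 0 < x
        · rw [indicator_of_mem (s := Ioi 0) hx, tailIntegral, ← lintegral_const_mul _ hk,
            ← lintegral_indicator measurableSet_Ioi]
          congr 1
          ext t
          by_cases ht : x < t <;> simp [indicator, hx, ht, mul_comm]
        · simp [indicator, hx]
    _ = ∫⁻ x in Ioi 0, h x * tailIntegral k x := lintegral_indicator measurableSet_Ioi _

lemma continuousAt_headIntegral {φ : ℝ → ℝ≥0∞} (hφ : Measurable φ) {x₀ b : ℝ} (hb : x₀ < b)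
    (hfin : headIntegral φ b ≠ ∞) : ContinuousAt (headIntegral φ) x₀ := by
  refine continuousAt_setLIntegral hφ (fun _ => measurableSet_Ioo) measurableSet_Ioo
    ((eventually_lt_nhds hb).mono fun x hx => Ioo_subset_Ioo_right hx.le) hfin ?_
  filter_upwards [Measure.ae_ne volume x₀] with y hy
  rcases hy.lt_or_gt with hy | hy
  · filter_upwards [eventually_gt_nhds hy] with x hx
    simp [mem_Ioo, hx, hy]
  · filter_upwards [eventually_lt_nhds hy] with x hx
    simp [mem_Ioo, hx.le.not_gt, hy.le.not_gt]

lemma continuousAt_tailIntegral {φ : ℝ → ℝ≥0∞} (hφ : Measurable φ) {a x₀ : ℝ} (ha : a < x₀)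
    (hfin : tailIntegral φ a ≠ ∞) : ContinuousAt (tailIntegral φ) x₀ := by
  refine continuousAt_setLIntegral hφ (fun _ => measurableSet_Ioi) measurableSet_Ioi
    ((eventually_gt_nhds ha).mono fun x hx => Ioi_subset_Ioi hx.le) hfin ?_
  filter_upwards [Measure.ae_ne volume x₀] with y hy
  rcases hy.lt_or_gt with hy | hy
  · filter_upwards [eventually_gt_nhds hy] with x hx
    simp [mem_Ioi, hx.le.not_gt, hy.le.not_gt]
  · filter_upwards [eventually_lt_nhds hy] with x hx
    simp [mem_Ioi, hx, hy]

section ReverseHardy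

variable {r : ℝ} {φ g : ℝ → ℝ≥0∞}

lemma rpow_tailIntegral_mul_headIntegral_le (hr : 0 ≤ r) (hφ : Measurable φ) (y : ℝ) :
    tailIntegral g y ^ r * headIntegral φ y ≤ ∫⁻ t in Ioi 0, φ t * tailIntegral g t ^ r :=
  calc tailIntegral g y ^ r * headIntegral φ y
      = ∫⁻ t in Ioo 0 y, φ t * tailIntegral g y ^ r := by
        rw [headIntegral, lintegral_mul_const _ hφ, mul_comm]
    _ ≤ ∫⁻ t in Ioo 0 y, φ t * tailIntegral g t ^ r :=
        setLIntegral_mono' measurableSet_Ioo fun t ht =>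
          mul_le_mul_right (ENNReal.rpow_le_rpow (antitone_tailIntegral g ht.2.le) hr) _
    _ ≤ ∫⁻ t in Ioi 0, φ t * tailIntegral g t ^ r := lintegral_mono_set Ioo_subset_Ioi_self

noncomputable def superlevelMass (g U : ℝ → ℝ≥0∞) (τ : ℝ) : ℝ≥0∞ :=
  (volume.restrict (Ioi 0)).withDensity g {x | τ < (U x).toReal}

lemma antitone_superlevelMass (g U : ℝ → ℝ≥0∞) : Antitone (superlevelMass g U) :=
  fun _ _ h => measure_mono fun _ hx => lt_of_le_of_lt h hx

lemma exists_le_headIntegral_lt_tailIntegral (hU : ∀ x, headIntegral φ x ≠ ∞) {τ : ℝ}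
    (hτ : 0 < τ) {c : ℝ≥0∞}
    (hc : c < superlevelMass g (headIntegral φ) τ) :
    ∃ y, ENNReal.ofReal τ ≤ headIntegral φ y ∧ c < tailIntegral g y := by
  set E := {x | τ < (headIntegral φ x).toReal}
  -- `y` lies just to the right of `inf E`, where the tail mass is continuous from the right.
  have hE_pos : E ⊆ Ioi 0 := fun x hx => by
    by_contra h
    have : τ < 0 := by simpa [E, headIntegral_of_nonpos φ (not_lt.1 h)] using hx
    linarith
  have hE_ne : E.Nonempty := nonempty_iff_ne_empty.2 fun h => by simp [superlevelMass, E, h] at hc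
  have hE_bdd : BddBelow E := ⟨0, fun x hx => (hE_pos hx).le⟩
  have hc' : c < tailIntegral g (sInf E) :=
    calc c < (volume.restrict (Ioi 0)).withDensity g E := hc
      _ ≤ (volume.restrict (Ioi 0)).withDensity g (Ici (sInf E)) :=
          measure_mono fun x hx => csInf_le hE_bdd hx
      _ ≤ ∫⁻ x in Ici (sInf E), g x := by
          rw [withDensity_apply _ measurableSet_Ici]
          exact lintegral_mono' (Measure.restrict_mono subset_rfl Measure.restrict_le_self) le_rfl
      _ = tailIntegral g (sInf E) := setLIntegral_congr Ioi_ae_eq_Ici.symm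
  obtain ⟨y, hy, hcy⟩ := exists_lt_lintegral_Ioi_of_lt hc'
  obtain ⟨e, heE, hey⟩ := exists_lt_of_csInf_lt hE_ne hy
  exact ⟨y, ((ENNReal.ofReal_lt_iff_lt_toReal hτ.le (hU e)).2 heE).le.trans
    (monotone_headIntegral φ hey.le), hcy⟩

lemma superlevelMass_rpow_mul_le (hr : 0 < r) (hφ : Measurable φ)
    (hU : ∀ x, headIntegral φ x ≠ ∞) {τ : ℝ} (hτ : 0 < τ) :
    superlevelMass g (headIntegral φ) τ ^ r * ENNReal.ofReal τ ≤
      ∫⁻ t in Ioi 0, φ t * tailIntegral g t ^ r := by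
  refine ENNReal.rpow_mul_le_of_forall_lt hr ENNReal.ofReal_ne_top fun c hc => ?_
  obtain ⟨y, hτy, hcy⟩ := exists_le_headIntegral_lt_tailIntegral hU hτ hc
  exact (mul_le_mul' (ENNReal.rpow_le_rpow hcy.le hr.le) hτy).trans
    (rpow_tailIntegral_mul_headIntegral_le hr.le hφ y)

/-- Distribution comparison: whenever `superlevelMass τ > λ`, the set `{tailIntegral g > λ}`
contains an interval `(0, y)` with `headIntegral φ y ≥ τ`, so its `φ dx`-measure is at least `τ`. -/
lemma lintegral_superlevelMass_rpow_le (hr : 0 < r) (hφ : Measurable φ)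
    (hU : ∀ x, headIntegral φ x ≠ ∞) :
    ∫⁻ τ in Ioi 0, superlevelMass g (headIntegral φ) τ ^ r ≤
      ∫⁻ t in Ioi 0, φ t * tailIntegral g t ^ r := by
  set ν := (volume.restrict (Ioi 0)).withDensity φ
  have hG : Measurable fun t => tailIntegral g t ^ r :=
    (antitone_tailIntegral g).measurable.pow_const r
  rw [show ∫⁻ t in Ioi 0, φ t * tailIntegral g t ^ r = ∫⁻ t, tailIntegral g t ^ r ∂ν from
    (lintegral_withDensity_eq_lintegral_mul _ hφ hG).symm]
  refine lintegral_le_lintegral_of_forall_meas_lt_le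
    ((antitone_superlevelMass g _).measurable.pow_const r) hG fun s => ?_
  set M := ν {t | s < tailIntegral g t ^ r}
  rcases eq_or_ne M ∞ with hM | hM
  · exact hM ▸ le_top
  rw [Measure.restrict_apply' measurableSet_Ioi]
  calc volume ({τ | s < superlevelMass g (headIntegral φ) τ ^ r} ∩ Ioi 0)
      ≤ volume (Ioc 0 M.toReal) := measure_mono ?_
    _ = M := by rw [Real.volume_Ioc, sub_zero, ENNReal.ofReal_toReal hM]
  rintro τ ⟨hsτ, hτ⟩
  obtain ⟨y, hτy, hy⟩ :=
    exists_le_headIntegral_lt_tailIntegral hU hτ ((ENNReal.rpow_inv_lt_iff hr).2 hsτ)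
  have hyM : headIntegral φ y ≤ M :=
    calc headIntegral φ y = ν (Ioo 0 y) := by
          rw [withDensity_apply _ measurableSet_Ioo, Measure.restrict_restrict measurableSet_Ioo,
            inter_eq_left.2 Ioo_subset_Ioi_self, headIntegral]
      _ ≤ M := measure_mono fun t ht =>
          (ENNReal.rpow_inv_lt_iff hr).1 (hy.trans_le (antitone_tailIntegral g ht.2.le))
  exact ⟨hτ, (ENNReal.ofReal_le_iff_le_toReal hM).1 (hτy.trans hyM)⟩

theorem lintegral_mul_headIntegral_rpow_le (hr : 0 < r) (hr1 : r < 1) (hφ : Measurable φ)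
    (hg : Measurable g) (hU : ∀ x, headIntegral φ x ≠ ∞) :
    ∫⁻ x in Ioi 0, g x * headIntegral φ x ^ (1 / r) ≤
      ENNReal.ofReal (1 / r) * (∫⁻ t in Ioi 0, φ t * tailIntegral g t ^ r) ^ (1 / r) := by
  set T := ∫⁻ t in Ioi 0, φ t * tailIntegral g t ^ r
  set H := superlevelMass g (headIntegral φ)
  have hs : 0 ≤ 1 / r - 1 := by rw [sub_nonneg, le_div_iff₀ hr, one_mul]; exact hr1.le
  have hU_meas : Measurable (headIntegral φ) := (monotone_headIntegral φ).measurable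
  have hH_meas : Measurable fun τ => H τ ^ r := (antitone_superlevelMass g _).measurable.pow_const r
  calc ∫⁻ x in Ioi 0, g x * headIntegral φ x ^ (1 / r)
      = ∫⁻ x, ENNReal.ofReal ((headIntegral φ x).toReal ^ (1 / r))
          ∂(volume.restrict (Ioi 0)).withDensity g := by
        rw [lintegral_withDensity_eq_lintegral_mul _ hg
          (hU_meas.ennreal_toReal.pow_const _).ennreal_ofReal]
        refine lintegral_congr fun x => ?_
        rw [Pi.mul_apply, ← ENNReal.ofReal_rpow_of_nonneg ENNReal.toReal_nonneg (by positivity),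
          ENNReal.ofReal_toReal (hU x)]
    _ = ENNReal.ofReal (1 / r) * ∫⁻ τ in Ioi 0, H τ * ENNReal.ofReal (τ ^ (1 / r - 1)) :=
        lintegral_rpow_eq_lintegral_meas_lt_mul _
          (Eventually.of_forall fun x => ENNReal.toReal_nonneg)
          hU_meas.ennreal_toReal.aemeasurable (by positivity)
    _ ≤ ENNReal.ofReal (1 / r) * ∫⁻ τ in Ioi 0, T ^ (1 / r - 1) * H τ ^ r := by
        refine mul_le_mul_right (setLIntegral_mono' measurableSet_Ioi fun τ hτ => ?_) _
        rw [← ENNReal.ofReal_rpow_of_nonneg (le_of_lt hτ) hs]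
        exact ENNReal.mul_rpow_sub_one_le hr hr1.le (superlevelMass_rpow_mul_le hr hφ hU hτ)
    _ = ENNReal.ofReal (1 / r) * (T ^ (1 / r - 1) * ∫⁻ τ in Ioi 0, H τ ^ r) := by
        rw [lintegral_const_mul _ hH_meas]
    _ ≤ ENNReal.ofReal (1 / r) * (T ^ (1 / r - 1) * T) := by
        gcongr
        exact lintegral_superlevelMass_rpow_le hr hφ hU
    _ = ENNReal.ofReal (1 / r) * T ^ (1 / r) := by
        have h := ENNReal.rpow_add_of_nonneg (x := T) _ _ hs zero_le_one
        rw [sub_add_cancel, ENNReal.rpow_one] at h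
        rw [h]

end ReverseHardy

section Hardy

variable {q : ℝ} {h w : ℝ → ℝ≥0∞}

local notation "W" => tailIntegral (fun t => w t ^ q)

lemma headIntegral_mul_rpow_le (hq : 0 < q) (hh : Measurable h) (t : ℝ) :
    headIntegral h t * W t ^ (1 / q) ≤ ∫⁻ x in Ioi 0, h x * W x ^ (1 / q) :=
  calc headIntegral h t * W t ^ (1 / q) = ∫⁻ x in Ioo 0 t, h x * W t ^ (1 / q) := by
        rw [headIntegral, lintegral_mul_const _ hh]
    _ ≤ ∫⁻ x in Ioo 0 t, h x * W x ^ (1 / q) := setLIntegral_mono' measurableSet_Ioo fun x hx =>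
        mul_le_mul_right (ENNReal.rpow_le_rpow (antitone_tailIntegral _ hx.2.le) (by positivity)) _
    _ ≤ ∫⁻ x in Ioi 0, h x * W x ^ (1 / q) := lintegral_mono_set Ioo_subset_Ioi_self

lemma lintegral_Ioo_headIntegral_mul_rpow_ne_top (hq : 0 < q) (hh : Measurable h)
    (hw : Measurable w) {a b : ℝ} (hWa : W a ≠ ∞) (hWb : W b ≠ 0)
    (hA : ∫⁻ x in Ioi 0, h x * W x ^ (1 / q) ≠ ∞) :
    ∫⁻ t in Ioo a b, (headIntegral h t * w t) ^ q ≠ ∞ := by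
  set A := ∫⁻ x in Ioi 0, h x * W x ^ (1 / q)
  have hU : Measurable fun t => (headIntegral h t * w t) ^ q :=
    ((monotone_headIntegral h).measurable.mul hw).pow_const q
  have key : (∫⁻ t in Ioo a b, (headIntegral h t * w t) ^ q) * W b ≤ A ^ q * W a :=
    calc (∫⁻ t in Ioo a b, (headIntegral h t * w t) ^ q) * W b
        = ∫⁻ t in Ioo a b, (headIntegral h t * W b ^ (1 / q)) ^ q * w t ^ q := by
          rw [← lintegral_mul_const _ hU]
          refine lintegral_congr fun t => ?_
          rw [ENNReal.mul_rpow_of_nonneg _ _ hq.le, ENNReal.mul_rpow_of_nonneg _ _ hq.le,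
            ← ENNReal.rpow_mul, one_div_mul_cancel hq.ne', ENNReal.rpow_one]
          ring
      _ ≤ ∫⁻ t in Ioo a b, A ^ q * w t ^ q := by
          refine setLIntegral_mono' measurableSet_Ioo fun t ht => ?_
          gcongr
          calc headIntegral h t * W b ^ (1 / q) ≤ headIntegral h t * W t ^ (1 / q) := by
                gcongr
                exact antitone_tailIntegral _ ht.2.le
            _ ≤ A := headIntegral_mul_rpow_le hq hh t
      _ ≤ A ^ q * W a := by
          rw [lintegral_const_mul _ (hw.pow_const q)]
          gcongr
          exact lintegral_mono_set Ioo_subset_Ioi_self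
  intro hS
  rw [hS, ENNReal.top_mul hWb, top_le_iff] at key
  exact ENNReal.mul_ne_top (ENNReal.rpow_ne_top_of_nonneg hq.le hA) hWa key

/-- Duality: test against `(U w)^{q-1}` and apply Hölder's inequality on each tail `(x, ∞)`. -/
lemma lintegral_Ioo_headIntegral_mul_rpow_le {q' : ℝ} (hqq' : q.HolderConjugate q')
    (hh : Measurable h) (hw : Measurable w) (a b : ℝ) :
    ∫⁻ t in Ioo a b, (headIntegral h t * w t) ^ q ≤
      (∫⁻ x in Ioi 0, h x * W x ^ (1 / q)) *
        (∫⁻ t in Ioo a b, (headIntegral h t * w t) ^ q) ^ (1 / q') := by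
  set S := ∫⁻ t in Ioo a b, (headIntegral h t * w t) ^ q
  have hUw : Measurable fun t => headIntegral h t * w t :=
    (monotone_headIntegral h).measurable.mul hw
  set k := (Ioo a b).indicator fun t => (headIntegral h t * w t) ^ (q - 1) * w t
  have hk : Measurable k := ((hUw.pow_const _).mul hw).indicator measurableSet_Ioo
  have htail : ∀ x, tailIntegral k x ≤ W x ^ (1 / q) * S ^ (1 / q') := by
    intro x
    calc tailIntegral k x
        = ∫⁻ t in Ioo a b ∩ Ioi x, w t * (headIntegral h t * w t) ^ (q - 1) := by
          rw [tailIntegral, setLIntegral_indicator measurableSet_Ioo]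
          exact lintegral_congr fun t => mul_comm _ _
      _ ≤ (∫⁻ t in Ioo a b ∩ Ioi x, w t ^ q) ^ (1 / q) *
            (∫⁻ t in Ioo a b ∩ Ioi x, ((headIntegral h t * w t) ^ (q - 1)) ^ q') ^ (1 / q') :=
          ENNReal.lintegral_mul_le_Lp_mul_Lq _ hqq' hw.aemeasurable
            (hUw.pow_const _).aemeasurable
      _ ≤ W x ^ (1 / q) * S ^ (1 / q') := by
          simp_rw [← ENNReal.rpow_mul, hqq'.sub_one_mul_conj]
          exact mul_le_mul'
            (ENNReal.rpow_le_rpow (lintegral_mono_set inter_subset_right)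
              (one_div_pos.2 hqq'.pos).le)
            (ENNReal.rpow_le_rpow (lintegral_mono_set inter_subset_left)
              (one_div_pos.2 hqq'.symm.pos).le)
  calc S = ∫⁻ t, (Ioo a b).indicator (fun t => (headIntegral h t * w t) ^ q) t :=
        (lintegral_indicator measurableSet_Ioo _).symm
    _ = ∫⁻ t, k t * headIntegral h t := by
        refine lintegral_congr fun t => ?_
        by_cases ht : t ∈ Ioo a b
        · have hsplit := ENNReal.rpow_add_of_nonneg (x := headIntegral h t * w t) (q - 1) 1
            (sub_nonneg.2 hqq'.lt.le) zero_le_one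
          rw [sub_add_cancel, ENNReal.rpow_one] at hsplit
          simp only [k, indicator_of_mem ht, hsplit]
          ring
        · simp [k, ht]
    _ = ∫⁻ x in Ioi 0, h x * tailIntegral k x := lintegral_mul_headIntegral hk hh
    _ ≤ ∫⁻ x in Ioi 0, h x * W x ^ (1 / q) * S ^ (1 / q') :=
        setLIntegral_mono' measurableSet_Ioi fun x _ => by
          rw [mul_assoc]; exact mul_le_mul_right (htail x) _
    _ = (∫⁻ x in Ioi 0, h x * W x ^ (1 / q)) * S ^ (1 / q') :=
        lintegral_mul_const _ (hh.mul ((antitone_tailIntegral _).measurable.pow_const _))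

theorem rpow_lintegral_headIntegral_mul_rpow_le (hq : 1 < q) (hh : Measurable h)
    (hw : Measurable w) (hW : ∀ x, 0 < x → W x ≠ 0 ∧ W x ≠ ∞) :
    (∫⁻ t in Ioi 0, (headIntegral h t * w t) ^ q) ^ (1 / q) ≤
      ∫⁻ x in Ioi 0, h x * W x ^ (1 / q) := by
  set A := ∫⁻ x in Ioi 0, h x * W x ^ (1 / q)
  rcases eq_or_ne A ∞ with hA | hA
  · exact hA ▸ le_top
  have hq0 : 0 < q := zero_lt_one.trans hq
  have hqq' := Real.HolderConjugate.conjExponent hq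
  rw [one_div, ENNReal.rpow_inv_le_iff hq0]
  -- On a compact subinterval of `(0, ∞)` the left side is finite, so duality can be divided out.
  refine lintegral_Ioi_zero_le_of_forall_Ioo_le fun a b ha hb => ?_
  rw [← ENNReal.rpow_inv_le_iff hq0, ← one_div]
  exact ENNReal.rpow_le_of_le_mul_rpow hqq'
    (lintegral_Ioo_headIntegral_mul_rpow_ne_top hq0 hh hw (hW a ha).2 (hW b hb).1 hA)
    (lintegral_Ioo_headIntegral_mul_rpow_le hqq' hh hw a b)

end Hardy

lemma copsonNorm_one_ofReal {r : ℝ} (hr : 0 < r) (u g : ℝ → ℝ≥0∞) :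
    copsonNorm 1 (ENNReal.ofReal r) u (fun _ => 1) g =
      (∫⁻ t in Ioi 0, u t ^ r * tailIntegral g t ^ r) ^ (1 / r) := by
  simp_rw [copsonNorm, wNorm_ofReal hr, wNorm_one, mul_one,
    ENNReal.mul_rpow_of_nonneg _ _ hr.le, mul_comm, tailIntegral]

lemma cesaroNorm_one_ofReal {q : ℝ} (hq : 0 < q) (w v f : ℝ → ℝ≥0∞) :
    cesaroNorm 1 (ENNReal.ofReal q) w v f =
      (∫⁻ t in Ioi 0, (headIntegral (fun x => f x * v x) t * w t) ^ q) ^ (1 / q) := by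
  simp_rw [cesaroNorm, wNorm_ofReal hq, wNorm_one, headIntegral]

lemma ENNReal.ne_zero_ne_top_of_rpow {a : ℝ≥0∞} {p : ℝ} (hp : 0 < p) (h0 : 0 < a ^ p)
    (htop : a ^ p < ∞) : a ≠ 0 ∧ a ≠ ∞ := by
  refine ⟨fun ha => ?_, fun ha => ?_⟩
  · simp [ha, ENNReal.zero_rpow_of_pos hp] at h0
  · simp [ha, ENNReal.top_rpow_of_pos hp] at htop

lemma MemOmegaDual.headIntegral_ne {r : ℝ} {u : ℝ → ℝ≥0∞} (hr : 0 < r)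
    (hu : MemOmegaDual (ENNReal.ofReal r) u) {x : ℝ} (hx : 0 < x) :
    headIntegral (fun σ => u σ ^ r) x ≠ 0 ∧ headIntegral (fun σ => u σ ^ r) x ≠ ∞ := by
  have h := hu.2 x hx
  rw [wNorm_ofReal hr] at h
  exact ENNReal.ne_zero_ne_top_of_rpow (one_div_pos.2 hr) h.1 h.2

lemma MemOmega.tailIntegral_ne {q : ℝ} {w : ℝ → ℝ≥0∞} (hq : 0 < q)
    (hw : MemOmega (ENNReal.ofReal q) w) {x : ℝ} (hx : 0 < x) :
    tailIntegral (fun σ => w σ ^ q) x ≠ 0 ∧ tailIntegral (fun σ => w σ ^ q) x ≠ ∞ := by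
  have h := hw.2 x hx
  rw [wNorm_ofReal hq] at h
  exact ENNReal.ne_zero_ne_top_of_rpow (one_div_pos.2 hq) h.1 h.2

section Multiplier

variable {q r : ℝ} {u v w f : ℝ → ℝ≥0∞}

local notation "U" => headIntegral (fun σ => u σ ^ r)
local notation "W" => tailIntegral (fun σ => w σ ^ q)
local notation "ρ" => fun x => U x ^ (1 / r) / W x ^ (1 / q)
local notation "Φ" => fun x => f x * v x * U x ^ (-(1 / r)) * W x ^ (1 / q)

lemma mul_eq_mul_rpow_div_rpow (hr : 0 < r) (hq : 0 < q) {x : ℝ} (hU : U x ≠ 0 ∧ U x ≠ ∞)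
    (hW : W x ≠ 0 ∧ W x ≠ ∞) : f x * v x = Φ x * ρ x := by
  have hU' : U x ^ (1 / r) ≠ 0 := (ENNReal.rpow_pos (pos_iff_ne_zero.2 hU.1) hU.2).ne'
  have hU'' : U x ^ (1 / r) ≠ ∞ := ENNReal.rpow_ne_top_of_nonneg (by positivity) hU.2
  have hW' : W x ^ (1 / q) ≠ 0 := (ENNReal.rpow_pos (pos_iff_ne_zero.2 hW.1) hW.2).ne'
  have hW'' : W x ^ (1 / q) ≠ ∞ := ENNReal.rpow_ne_top_of_nonneg (by positivity) hW.2
  simp only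
  rw [ENNReal.rpow_neg, ENNReal.div_eq_inv_mul]
  calc f x * v x = f x * v x * ((U x ^ (1 / r))⁻¹ * U x ^ (1 / r)) *
        (W x ^ (1 / q) * (W x ^ (1 / q))⁻¹) := by
        rw [ENNReal.inv_mul_cancel hU' hU'', ENNReal.mul_inv_cancel hW' hW'', mul_one, mul_one]
    _ = _ := by ring

lemma multNorm_le_ofReal_mul_essSup (hr : 0 < r) (hr1 : r < 1) (hq1 : 1 < q) (hu : Measurable u)
    (hw : Measurable w)
    (hU : ∀ x, 0 < x → U x ≠ 0 ∧ U x ≠ ∞) (hW : ∀ x, 0 < x → W x ≠ 0 ∧ W x ≠ ∞) :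
    multNorm (copsonNorm 1 (ENNReal.ofReal r) u fun _ => 1) (cesaroNorm 1 (ENNReal.ofReal q) w v) f
      ≤ ENNReal.ofReal (1 / r) * essSup Φ (volume.restrict (Ioi 0)) := by
  set M := essSup Φ (volume.restrict (Ioi 0))
  have hq : 0 < q := zero_lt_one.trans hq1
  have hUmeas : Measurable U := (monotone_headIntegral _).measurable
  have hUfin : ∀ x, U x ≠ ∞ := fun x => by
    rcases le_or_gt x 0 with hx | hx
    · simp [headIntegral_of_nonpos _ hx]
    · exact (hU x hx).2
  refine iSup₂_le fun g hg => ENNReal.div_le_of_le_mul ?_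
  have hρg : Measurable fun x => M * g x * ρ x := (measurable_const.mul hg.1).mul
    ((hUmeas.pow_const _).fun_div ((antitone_tailIntegral _).measurable.pow_const _))
  have hfgv : ∀ t, headIntegral (fun x => f x * g x * v x) t ≤
      headIntegral (fun x => M * g x * ρ x) t := fun t => by
    refine lintegral_mono_ae ?_
    filter_upwards [ae_restrict_of_ae_restrict_of_subset Ioo_subset_Ioi_self
      (_root_.ae_le_essSup (f := Φ)), ae_restrict_mem measurableSet_Ioo] with x hΦ hx
    calc f x * g x * v x = g x * (Φ x * ρ x) := by
          rw [← mul_eq_mul_rpow_div_rpow hr hq (hU x hx.1) (hW x hx.1)]; ring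
      _ ≤ g x * (M * ρ x) := by gcongr
      _ = M * g x * ρ x := by ring
  rw [cesaroNorm_one_ofReal hq, copsonNorm_one_ofReal hr]
  calc (∫⁻ t in Ioi 0, (headIntegral (fun x => f x * g x * v x) t * w t) ^ q) ^ (1 / q)
      ≤ (∫⁻ t in Ioi 0, (headIntegral (fun x => M * g x * ρ x) t * w t) ^ q) ^ (1 / q) := by
        gcongr with t
        exact hfgv t
    _ ≤ ∫⁻ x in Ioi 0, M * g x * (U x ^ (1 / r) / W x ^ (1 / q)) * W x ^ (1 / q) :=
        rpow_lintegral_headIntegral_mul_rpow_le hq1 hρg hw hW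
    _ ≤ ∫⁻ x in Ioi 0, M * (g x * U x ^ (1 / r)) := lintegral_mono fun x => by
        rw [mul_assoc, mul_assoc, div_eq_mul_inv, mul_assoc]
        gcongr
        exact mul_le_of_le_one_right' (ENNReal.inv_mul_le_one _)
    _ = M * ∫⁻ x in Ioi 0, g x * U x ^ (1 / r) :=
        lintegral_const_mul _ (hg.1.mul (hUmeas.pow_const _))
    _ ≤ M * (ENNReal.ofReal (1 / r) *
          (∫⁻ t in Ioi 0, u t ^ r * tailIntegral g t ^ r) ^ (1 / r)) := by
        gcongr
        exact lintegral_mul_headIntegral_rpow_le hr hr1 (hu.pow_const r) hg.1 hUfin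
    _ = _ := by ring

lemma copsonNorm_indicator_le (hr : 0 < r) (hu : Measurable u) {b : ℝ} {E : Set ℝ}
    (hE : MeasurableSet E) (hEb : E ⊆ Iio b) :
    copsonNorm 1 (ENNReal.ofReal r) u (fun _ => 1) (E.indicator 1) ≤
      volume E * U b ^ (1 / r) := by
  rw [copsonNorm_one_ofReal hr]
  calc (∫⁻ t in Ioi 0, u t ^ r * tailIntegral (E.indicator 1) t ^ r) ^ (1 / r)
      ≤ (∫⁻ t in Ioi 0, (Ioo 0 b).indicator (fun t => u t ^ r * volume E ^ r) t) ^ (1 / r) := by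
        refine ENNReal.rpow_le_rpow (setLIntegral_mono' measurableSet_Ioi fun t ht => ?_)
          (by positivity)
        have htail : tailIntegral (E.indicator 1) t = volume (E ∩ Ioi t) := by
          rw [tailIntegral, lintegral_indicator_one hE, Measure.restrict_apply hE]
        by_cases htb : t < b
        · rw [indicator_of_mem (show t ∈ Ioo 0 b from ⟨ht, htb⟩), htail]
          gcongr
          exact inter_subset_left
        · have : E ∩ Ioi t = ∅ := eq_empty_of_forall_notMem fun x hx =>
            htb ((hx.2 : t < x).trans (hEb hx.1))
          simp [htail, this, ENNReal.zero_rpow_of_pos hr]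
    _ = (U b * volume E ^ r) ^ (1 / r) := by
        rw [setLIntegral_indicator measurableSet_Ioo, inter_eq_left.2 Ioo_subset_Ioi_self,
          lintegral_mul_const _ (hu.pow_const r), headIntegral]
    _ = volume E * U b ^ (1 / r) := by
        rw [ENNReal.mul_rpow_of_nonneg _ _ (by positivity), ← ENNReal.rpow_mul,
          mul_one_div_cancel hr.ne', ENNReal.rpow_one, mul_comm]

lemma lintegral_mul_rpow_le_cesaroNorm (hq : 0 < q) (hw : Measurable w) {b : ℝ} (hb : 0 ≤ b)
    {E : Set ℝ} (hE : MeasurableSet E) (hEb : E ⊆ Ioo 0 b) :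
    (∫⁻ x in E, f x * v x) * W b ^ (1 / q) ≤
      cesaroNorm 1 (ENNReal.ofReal q) w v (fun x => f x * E.indicator 1 x) := by
  set K := ∫⁻ x in E, f x * v x
  have hhead : ∀ t, b < t → K = headIntegral (fun x => f x * E.indicator 1 x * v x) t :=
    fun t ht =>
      have hEt : E ⊆ Ioo 0 t := fun x hx => ⟨(hEb hx).1, (hEb hx).2.trans ht⟩
      calc K = ∫⁻ x in Ioo 0 t, E.indicator (fun x => f x * v x) x := by
            rw [setLIntegral_indicator hE, inter_eq_left.2 hEt]
        _ = _ := lintegral_congr fun x => by by_cases hx : x ∈ E <;> simp [hx]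
  rw [cesaroNorm_one_ofReal hq]
  calc K * W b ^ (1 / q) = (∫⁻ t in Ioi b, (K * w t) ^ q) ^ (1 / q) := by
        simp_rw [ENNReal.mul_rpow_of_nonneg _ _ hq.le]
        rw [lintegral_const_mul _ (hw.pow_const q),
          ENNReal.mul_rpow_of_nonneg _ _ (by positivity), ← ENNReal.rpow_mul,
          mul_one_div_cancel hq.ne', ENNReal.rpow_one, tailIntegral]
    _ ≤ (∫⁻ t in Ioi b,
          (headIntegral (fun x => f x * E.indicator 1 x * v x) t * w t) ^ q) ^ (1 / q) := by
        gcongr ?_ ^ _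
        exact setLIntegral_mono' measurableSet_Ioi fun t ht => by rw [hhead t ht]
    _ ≤ (∫⁻ t in Ioi 0,
          (headIntegral (fun x => f x * E.indicator 1 x * v x) t * w t) ^ q) ^ (1 / q) := by
        gcongr ?_ ^ _
        exact lintegral_mono_set (Ioi_subset_Ioi hb)

lemma mul_volume_le_lintegral (hr : 0 < r) (hq : 0 < q)
    (hU : ∀ x, 0 < x → U x ≠ 0 ∧ U x ≠ ∞) (hW : ∀ x, 0 < x → W x ≠ 0 ∧ W x ≠ ∞)
    {a b : ℝ} (ha : 0 < a) {E : Set ℝ} (hE : MeasurableSet E) (hEab : E ⊆ Ioo a b)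
    {c : ℝ≥0∞} (hc : ∀ x ∈ E, c ≤ Φ x) : c * ρ a * volume E ≤ ∫⁻ x in E, f x * v x := by
  rw [← setLIntegral_const]
  refine setLIntegral_mono' hE fun x hx => ?_
  have hx0 : 0 < x := ha.trans (hEab hx).1
  calc c * ρ a ≤ Φ x * ρ x := by
        refine mul_le_mul' (hc x hx) (ENNReal.div_le_div ?_ ?_)
        · exact ENNReal.rpow_le_rpow (monotone_headIntegral _ (hEab hx).1.le) (by positivity)
        · exact ENNReal.rpow_le_rpow (antitone_tailIntegral _ (hEab hx).1.le) (by positivity)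
    _ = f x * v x := (mul_eq_mul_rpow_div_rpow hr hq (hU x hx0) (hW x hx0)).symm

lemma mul_div_le_multNorm (hr : 0 < r) (hq : 0 < q) (hu : Measurable u) (hw : Measurable w)
    (hU : ∀ x, 0 < x → U x ≠ 0 ∧ U x ≠ ∞) (hW : ∀ x, 0 < x → W x ≠ 0 ∧ W x ≠ ∞)
    {a b : ℝ} (ha : 0 < a) {E : Set ℝ} (hE : MeasurableSet E) (hEab : E ⊆ Ioo a b)
    (hE0 : volume E ≠ 0) {c : ℝ≥0∞} (hc : ∀ x ∈ E, c ≤ Φ x) :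
    c * (ρ a / ρ b) ≤
      multNorm (copsonNorm 1 (ENNReal.ofReal r) u fun _ => 1)
        (cesaroNorm 1 (ENNReal.ofReal q) w v) f := by
  obtain ⟨x₁, hx₁⟩ := nonempty_of_measure_ne_zero hE0
  have hb : 0 < b := ha.trans ((hEab hx₁).1.trans (hEab hx₁).2)
  have hE0b : E ⊆ Ioo 0 b := fun x hx => ⟨ha.trans (hEab hx).1, (hEab hx).2⟩
  have hEfin : volume E ≠ ∞ :=
    ne_top_of_le_ne_top (by simp [Real.volume_Ioo]) (measure_mono hEab)
  have hWb' : W b ^ (1 / q) ≠ 0 :=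
    (ENNReal.rpow_pos (pos_iff_ne_zero.2 (hW b hb).1) (hW b hb).2).ne'
  have hWb'' : W b ^ (1 / q) ≠ ∞ := ENNReal.rpow_ne_top_of_nonneg (by positivity) (hW b hb).2
  have hg : Measurable (E.indicator (1 : ℝ → ℝ≥0∞)) ∧
      ¬ ∀ᵐ x ∂(volume.restrict (Ioi 0)), E.indicator (1 : ℝ → ℝ≥0∞) x = 0 := by
    refine ⟨measurable_one.indicator hE, fun h => hE0 (measure_mono_null (fun x hx => ?_)
      (ae_iff.1 ((ae_restrict_iff' measurableSet_Ioi).1 h)))⟩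
    simp [hx, (hE0b hx).1]
  have hCop : copsonNorm 1 (ENNReal.ofReal r) u (fun _ => 1) (E.indicator 1) ≤
      ρ b * (volume E * W b ^ (1 / q)) := by
    refine (copsonNorm_indicator_le hr hu hE (hE0b.trans Ioo_subset_Iio_self)).trans_eq ?_
    show volume E * U b ^ (1 / r) = U b ^ (1 / r) / W b ^ (1 / q) * (volume E * W b ^ (1 / q))
    rw [mul_left_comm, ENNReal.div_mul_cancel hWb' hWb'', mul_comm]
  have hCes : c * ρ a * (volume E * W b ^ (1 / q)) ≤
      cesaroNorm 1 (ENNReal.ofReal q) w v (fun x => f x * E.indicator 1 x) := by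
    rw [← mul_assoc]
    exact (mul_le_mul_left (mul_volume_le_lintegral hr hq hU hW ha hE hEab hc) _).trans
      (lintegral_mul_rpow_le_cesaroNorm hq hw hb.le hE hE0b)
  calc c * (ρ a / ρ b)
      = c * ρ a * (volume E * W b ^ (1 / q)) / (ρ b * (volume E * W b ^ (1 / q))) := by
        rw [ENNReal.mul_div_mul_right _ _ (mul_ne_zero hE0 hWb') (ENNReal.mul_ne_top hEfin hWb''),
          mul_div_assoc]
    _ ≤ cesaroNorm 1 (ENNReal.ofReal q) w v (fun x => f x * E.indicator 1 x) /
          copsonNorm 1 (ENNReal.ofReal r) u (fun _ => 1) (E.indicator 1) :=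
        ENNReal.div_le_div hCes hCop
    _ ≤ _ := le_iSup₂ (f := fun g _ => cesaroNorm 1 (ENNReal.ofReal q) w v (fun x => f x * g x) /
          copsonNorm 1 (ENNReal.ofReal r) u (fun _ => 1) g) (E.indicator 1) hg

lemma tendsto_ratio_nhdsGT_one (hr : 0 < r) (hq : 0 < q) (hu : Measurable u) (hw : Measurable w)
    (hU : ∀ x, 0 < x → U x ≠ 0 ∧ U x ≠ ∞) (hW : ∀ x, 0 < x → W x ≠ 0 ∧ W x ≠ ∞)
    {x₀ : ℝ} (hx₀ : 0 < x₀) :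
    Tendsto (fun δ : ℝ => ρ (x₀ - δ) / ρ (x₀ + δ)) (𝓝[>] 0) (𝓝 1) := by
  have hUx₀ := hU x₀ hx₀
  have hWx₀ := hW x₀ hx₀
  have hU' : U x₀ ^ (1 / r) ≠ 0 := (ENNReal.rpow_pos (pos_iff_ne_zero.2 hUx₀.1) hUx₀.2).ne'
  have hW' : W x₀ ^ (1 / q) ≠ ∞ := ENNReal.rpow_ne_top_of_nonneg (by positivity) hWx₀.2
  have hρ0 : ρ x₀ ≠ 0 := ENNReal.div_ne_zero.2 ⟨hU', hW'⟩
  have hρtop : ρ x₀ ≠ ∞ := ENNReal.div_ne_top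
    (ENNReal.rpow_ne_top_of_nonneg (by positivity) hUx₀.2)
    (ENNReal.rpow_pos (pos_iff_ne_zero.2 hWx₀.1) hWx₀.2).ne'
  have hρc : ContinuousAt ρ x₀ :=
    ENNReal.Tendsto.div
      ((ENNReal.continuous_rpow_const.tendsto _).comp (continuousAt_headIntegral (hu.pow_const r)
        (lt_add_one x₀) (hU _ (by linarith)).2))
      (Or.inl hU')
      ((ENNReal.continuous_rpow_const.tendsto _).comp (continuousAt_tailIntegral (hw.pow_const q)
        (half_lt_self hx₀) (hW _ (half_pos hx₀)).2))
      (Or.inl hW')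
  rw [← ENNReal.div_self hρ0 hρtop]
  refine ENNReal.Tendsto.div ?_ (Or.inl hρ0) ?_ (Or.inl hρtop)
  · exact hρc.tendsto.comp (((continuous_sub_left x₀).tendsto' 0 x₀ (sub_zero x₀)).mono_left
      nhdsWithin_le_nhds)
  · exact hρc.tendsto.comp (((continuous_const_add x₀).tendsto' 0 x₀ (add_zero x₀)).mono_left
      nhdsWithin_le_nhds)

lemma essSup_le_multNorm (hr : 0 < r) (hq : 0 < q) (hu : Measurable u) (hv : Measurable v)
    (hw : Measurable w) (hf : Measurable f)
    (hU : ∀ x, 0 < x → U x ≠ 0 ∧ U x ≠ ∞) (hW : ∀ x, 0 < x → W x ≠ 0 ∧ W x ≠ ∞) :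
    essSup Φ (volume.restrict (Ioi 0)) ≤
      multNorm (copsonNorm 1 (ENNReal.ofReal r) u fun _ => 1)
        (cesaroNorm 1 (ENNReal.ofReal q) w v) f := by
  refine le_of_forall_lt_imp_le_of_dense fun c hc => ?_
  have hΦ : Measurable Φ :=
    ((hf.mul hv).mul ((monotone_headIntegral _).measurable.pow_const _)).mul
      ((antitone_tailIntegral _).measurable.pow_const _)
  set A := Ioi 0 ∩ {x | c < Φ x}
  have hA0 : volume A ≠ 0 := fun h0 => hc.not_ge <| essSup_le_of_ae_le c <|
    (ae_restrict_iff' measurableSet_Ioi).2 <| (measure_eq_zero_iff_ae_notMem.1 h0).mono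
      fun x hx hx0 => not_lt.1 fun h => hx ⟨hx0, h⟩
  obtain ⟨x₀, hx₀A, hx₀⟩ := exists_mem_forall_mem_nhdsWithin_pos_measure hA0
  have hev : ∀ᶠ δ in 𝓝[>] (0 : ℝ), c * (ρ (x₀ - δ) / ρ (x₀ + δ)) ≤
      multNorm (copsonNorm 1 (ENNReal.ofReal r) u fun _ => 1)
        (cesaroNorm 1 (ENNReal.ofReal q) w v) f := by
    filter_upwards [Ioo_mem_nhdsGT hx₀A.1] with δ hδ
    have hnhds : A ∩ Ioo (x₀ - δ) (x₀ + δ) ∈ 𝓝[A] x₀ :=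
      inter_mem_nhdsWithin A (Ioo_mem_nhds (by linarith [hδ.1]) (by linarith [hδ.1]))
    exact mul_div_le_multNorm hr hq hu hw hU hW (sub_pos.2 hδ.2)
      ((measurableSet_Ioi.inter (measurableSet_lt measurable_const hΦ)).inter measurableSet_Ioo)
      inter_subset_right (hx₀ _ hnhds).ne' fun x hx => hx.1.2.le
  have hlim := ENNReal.Tendsto.const_mul (tendsto_ratio_nhdsGT_one hr hq hu hw hU hW hx₀A.1)
    (Or.inl one_ne_zero) (a := c)
  simpa using le_of_tendsto hlim hev

end Multiplier

/-- Theorem 3.6: for `0 < r < 1 < q < ∞`,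
`‖f‖_{M(Cop_r(u), Ces_{1,q}(w,v))}
  ≈ esssup_{x>0} f(x) v(x) (∫_0^x u^r)^{−1/r} (∫_x^∞ w^q)^{1/q}`,
with constants depending only on `q` and `r`. -/
theorem multiplier_r_lt_p_eq_one_lt_q (q r : ℝ) (hr : 0 < r) (hr1 : r < 1)
    (hq1 : 1 < q) :
    ∃ c C : ℝ≥0∞, 0 < c ∧ c < ∞ ∧ 0 < C ∧ C < ∞ ∧
      ∀ u v w : ℝ → ℝ≥0∞, IsWeightOn v → MemOmegaDual (ENNReal.ofReal r) u →
        MemOmega (ENNReal.ofReal q) w →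
        ∀ f : ℝ → ℝ≥0∞, Measurable f →
          let lhs := multNorm (copsonNorm 1 (ENNReal.ofReal r) u (fun _ => 1))
            (cesaroNorm 1 (ENNReal.ofReal q) w v) f
          let rhs := essSup (fun x => f x * v x *
              (∫⁻ σ in Ioo (0:ℝ) x, u σ ^ r) ^ (-(1 / r)) *
              (∫⁻ σ in Ioi x, w σ ^ q) ^ (1 / q))
            (volume.restrict (Ioi (0:ℝ)))
          c * rhs ≤ lhs ∧ lhs ≤ C * rhs := by
  have hq : 0 < q := zero_lt_one.trans hq1
  refine ⟨1, ENNReal.ofReal (1 / r), one_pos, ENNReal.one_lt_top,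
    ENNReal.ofReal_pos.2 (one_div_pos.2 hr), ENNReal.ofReal_lt_top, ?_⟩
  intro u v w hv hu hw f hf lhs rhs
  have hU := fun x (hx : 0 < x) => hu.headIntegral_ne hr hx
  have hW := fun x (hx : 0 < x) => hw.tailIntegral_ne hq hx
  exact ⟨(one_mul rhs).trans_le (essSup_le_multNorm hr hq hu.1 hv.1 hw.1 hf hU hW),
    multNorm_le_ofReal_mul_essSup hr hr1 hq1 hu.1 hw.1 hU hW⟩
end
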